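/- arXiv:1712.07553 — 13 statements merged into one kernel-verified Lean document; each statement's English description precedes it below -/
import Mathlib

section
/- Let Λ be a finite, non-zero measure on [0,1] with ∫_{[0,1]} p^{−1} Λ(dp) < ∞, and define f(y) := ∫_{[0,1]} (1 − (1−p)^{e^y}) e^{−y} p^{−2} Λ(dp) for y ∈ ℝ. Then f(y) is finite for every y ∈ ℝ, f is positive, nonincreasing and continuous on ℝ, and f(y) → 0 as y → ∞. -/
open MeasureTheory Filter Set

/-! For fixed `p`, the quantity `(1 - (1 - p) ^ r) / r` is minus the slope of the secant of the
convex map `s ↦ (1 - p) ^ s` between `0` and `r`, so it decreases in `r = e^y`: the integrand is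
antitone in `y`. Bernoulli's inequality bounds it by `(1 + e^{-y}) / p`, integrable by the dust
condition, and monotonicity lets the integrand at a single `y₀` dominate all larger `y`, so
dominated convergence gives continuity and the limit `0` (the integrand is at most `e^{-y} / p²`).
The dust condition also rules out an atom at `p = 0`, so `Λ` charges `(0, 1]`, where the integrand
is positive. -/

lemma one_sub_rpow_div_antitoneOn {q : ℝ} (hq₀ : 0 ≤ q) :
    AntitoneOn (fun s : ℝ => (1 - q ^ s) / s) (Ioi 0) := by
  intro r (hr : 0 < r) s (hs : 0 < s) hrs
  rcases hq₀.eq_or_lt with rfl | hq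
  · simpa [Real.zero_rpow hr.ne', Real.zero_rpow hs.ne'] using one_div_le_one_div_of_le hr hrs
  · have := (convexOn_rpow_left hq).secant_mono (mem_univ 0) (mem_univ r) (mem_univ s)
      hr.ne' hs.ne' hrs
    simp only [Real.rpow_zero, sub_zero] at this
    simpa only [← neg_div, neg_sub] using neg_le_neg this

lemma one_sub_one_sub_rpow_le {p r : ℝ} (hp₀ : 0 ≤ p) (hp₁ : p ≤ 1) (hr : 0 < r) :
    1 - (1 - p) ^ r ≤ (r + 1) * p := by
  rcases le_or_gt 1 r with h | h
  · have := one_add_mul_self_le_rpow_one_add (by linarith : (-1 : ℝ) ≤ -p) h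
    rw [← sub_eq_add_neg] at this
    nlinarith
  · have := Real.rpow_le_rpow_of_exponent_ge' (by linarith : (0 : ℝ) ≤ 1 - p) (by linarith)
      hr.le h.le
    rw [Real.rpow_one] at this
    nlinarith

noncomputable def fIntegrand (y p : ℝ) : ℝ := (1 - (1 - p) ^ Real.exp y) / Real.exp y / p ^ 2

section fIntegrand

variable {y p : ℝ}

lemma fIntegrand_nonneg (hp : p ∈ Icc (0 : ℝ) 1) : 0 ≤ fIntegrand y p := by
  have : (1 - p) ^ Real.exp y ≤ 1 :=
    Real.rpow_le_one (by linarith [hp.2]) (by linarith [hp.1]) (Real.exp_pos y).le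
  exact div_nonneg (div_nonneg (sub_nonneg.2 this) (Real.exp_pos y).le) (sq_nonneg p)

lemma fIntegrand_pos (hp : p ∈ Ioc (0 : ℝ) 1) : 0 < fIntegrand y p := by
  have : (1 - p) ^ Real.exp y < 1 :=
    Real.rpow_lt_one (by linarith [hp.2]) (by linarith [hp.1]) (Real.exp_pos y)
  exact div_pos (div_pos (sub_pos.2 this) (Real.exp_pos y)) (pow_pos hp.1 2)

lemma fIntegrand_le_inv (hp : p ∈ Icc (0 : ℝ) 1) :
    fIntegrand y p ≤ (1 + Real.exp (-y)) * p⁻¹ := by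
  rcases hp.1.eq_or_lt with rfl | hp₀
  · simp [fIntegrand]
  calc fIntegrand y p ≤ (Real.exp y + 1) * p / Real.exp y / p ^ 2 := by
        unfold fIntegrand
        gcongr
        exact one_sub_one_sub_rpow_le hp.1 hp.2 (Real.exp_pos y)
    _ = (1 + Real.exp (-y)) * p⁻¹ := by
        rw [Real.exp_neg]
        field_simp

lemma fIntegrand_le_exp_neg_div (hp : p ∈ Icc (0 : ℝ) 1) :
    fIntegrand y p ≤ Real.exp (-y) / p ^ 2 := by
  have : 0 ≤ (1 - p) ^ Real.exp y := Real.rpow_nonneg (by linarith [hp.2]) _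
  rw [fIntegrand, Real.exp_neg, inv_eq_one_div]
  gcongr
  linarith

lemma antitone_fIntegrand (hp : p ∈ Icc (0 : ℝ) 1) : Antitone (fun y => fIntegrand y p) :=
  fun _ _ h => div_le_div_of_nonneg_right
    (one_sub_rpow_div_antitoneOn (by linarith [hp.2]) (Real.exp_pos _) (Real.exp_pos _)
      (Real.exp_le_exp.2 h)) (sq_nonneg p)

lemma continuous_fIntegrand_left (p : ℝ) : Continuous (fun y => fIntegrand y p) :=
  ((continuous_const.sub (continuous_const.rpow Real.continuous_exp
    fun y => Or.inr (Real.exp_pos y))).div Real.continuous_exp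
    fun y => (Real.exp_pos y).ne').div_const _

lemma measurable_fIntegrand (y : ℝ) : Measurable (fIntegrand y) := by
  unfold fIntegrand
  fun_prop

lemma tendsto_fIntegrand_atTop (hp : p ∈ Icc (0 : ℝ) 1) :
    Tendsto (fun y => fIntegrand y p) atTop (nhds 0) :=
  squeeze_zero (fun _ => fIntegrand_nonneg hp) (fun _ => fIntegrand_le_exp_neg_div hp)
    (by simpa using Real.tendsto_exp_neg_atTop_nhds_zero.div_const (p ^ 2))

end fIntegrand

section integral

variable {Λ : Measure ℝ}

lemma enorm_inv_le_ofReal_inv (p : ℝ) : ‖p⁻¹‖ₑ ≤ (ENNReal.ofReal p)⁻¹ := by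
  rcases le_or_gt p 0 with hp | hp
  · simp [ENNReal.ofReal_eq_zero.2 hp]
  · rw [Real.enorm_eq_ofReal (inv_nonneg.2 hp.le), ENNReal.ofReal_inv_of_pos hp]

lemma integrableOn_inv_of_lintegral_lt_top {s : Set ℝ}
    (h : ∫⁻ p in s, (ENNReal.ofReal p)⁻¹ ∂Λ < ⊤) : IntegrableOn (fun p : ℝ => p⁻¹) s Λ :=
  ⟨measurable_inv.aestronglyMeasurable, (lintegral_mono enorm_inv_le_ofReal_inv).trans_lt h⟩

lemma measure_singleton_zero_of_lintegral_inv_lt_top {s : Set ℝ} (hs : 0 ∈ s)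
    (h : ∫⁻ p in s, (ENNReal.ofReal p)⁻¹ ∂Λ < ⊤) : Λ {0} = 0 := by
  by_contra h0
  have := (lintegral_mono_set (μ := Λ) (f := fun p => (ENNReal.ofReal p)⁻¹)
    (singleton_subset_iff.2 hs)).trans_lt h
  simp [ENNReal.mul_top h0] at this

lemma measure_Ioc_zero_one_ne_zero (hΛ : Λ ≠ 0) (hsupp : Λ (Icc (0 : ℝ) 1)ᶜ = 0)
    (h0 : Λ {0} = 0) : Λ (Ioc 0 1) ≠ 0 := by
  rw [← Icc_sdiff_left, measure_sdiff_null h0]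
  intro h
  apply hΛ
  rw [← Measure.measure_univ_eq_zero, ← measure_add_measure_compl measurableSet_Icc, h, hsupp,
    add_zero]

lemma integrableOn_fIntegrand (h : IntegrableOn (fun p : ℝ => p⁻¹) (Icc 0 1) Λ) (y : ℝ) :
    IntegrableOn (fIntegrand y) (Icc 0 1) Λ := by
  refine (h.const_mul (1 + Real.exp (-y))).mono' (measurable_fIntegrand y).aestronglyMeasurable ?_
  filter_upwards [ae_restrict_mem measurableSet_Icc] with p hp
  rw [Real.norm_of_nonneg (fIntegrand_nonneg hp)]
  exact fIntegrand_le_inv hp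

variable (hint : ∀ y, IntegrableOn (fIntegrand y) (Icc 0 1) Λ)
include hint

lemma integral_fIntegrand_pos (hΛ : Λ (Ioc 0 1) ≠ 0) (y : ℝ) :
    0 < ∫ p in Icc 0 1, fIntegrand y p ∂Λ := by
  have hnonneg : 0 ≤ᵐ[Λ.restrict (Icc 0 1)] fIntegrand y :=
    ae_restrict_of_forall_mem measurableSet_Icc fun _ hp => fIntegrand_nonneg hp
  rw [setIntegral_pos_iff_support_of_nonneg_ae hnonneg (hint y)]
  refine (pos_iff_ne_zero.2 hΛ).trans_le (measure_mono fun p hp => ⟨?_, Ioc_subset_Icc_self hp⟩)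
  exact (fIntegrand_pos hp).ne'

lemma antitone_integral_fIntegrand : Antitone fun y => ∫ p in Icc 0 1, fIntegrand y p ∂Λ :=
  fun _ _ h => setIntegral_mono_on (hint _) (hint _) measurableSet_Icc
    fun _ hp => antitone_fIntegrand hp h

lemma continuous_integral_fIntegrand :
    Continuous fun y => ∫ p in Icc 0 1, fIntegrand y p ∂Λ := by
  refine continuous_iff_continuousAt.2 fun y₀ => continuousAt_of_dominated
    (Eventually.of_forall fun y => (measurable_fIntegrand y).aestronglyMeasurable) ?_
    (hint (y₀ - 1))
    (Eventually.of_forall fun p => (continuous_fIntegrand_left p).continuousAt)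
  filter_upwards [Ioi_mem_nhds (sub_one_lt y₀)] with y hy
  filter_upwards [ae_restrict_mem measurableSet_Icc] with p hp
  rw [Real.norm_of_nonneg (fIntegrand_nonneg hp)]
  exact antitone_fIntegrand hp (le_of_lt hy)

lemma tendsto_integral_fIntegrand_atTop :
    Tendsto (fun y => ∫ p in Icc 0 1, fIntegrand y p ∂Λ) atTop (nhds 0) := by
  have := tendsto_integral_filter_of_dominated_convergence (fIntegrand 0)
    (Eventually.of_forall fun y => (measurable_fIntegrand y).aestronglyMeasurable) ?_ (hint 0)
    (ae_restrict_of_forall_mem measurableSet_Icc fun _ hp => tendsto_fIntegrand_atTop hp)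
  · simpa using this
  filter_upwards [eventually_ge_atTop 0] with y hy
  filter_upwards [ae_restrict_mem measurableSet_Icc] with p hp
  rw [Real.norm_of_nonneg (fIntegrand_nonneg hp)]
  exact antitone_fIntegrand hp hy

end integral

theorem f_properties_general
    (Λ : Measure ℝ) (hΛ : Λ ≠ 0) (hsupp : Λ (Icc (0 : ℝ) 1)ᶜ = 0)
    (hdust : (∫⁻ p in Icc (0 : ℝ) 1, (ENNReal.ofReal p)⁻¹ ∂Λ) < ⊤)
    (f : ℝ → ℝ)
    (hf : ∀ y : ℝ,
      f y = ∫ p in Icc (0 : ℝ) 1, (1 - (1 - p) ^ Real.exp y) / Real.exp y / p ^ 2 ∂Λ) :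
    (∀ y : ℝ,
        IntegrableOn (fun p : ℝ => (1 - (1 - p) ^ Real.exp y) / Real.exp y / p ^ 2)
          (Icc (0 : ℝ) 1) Λ) ∧
      (∀ y : ℝ, 0 < f y) ∧ Antitone f ∧ Continuous f ∧ Tendsto f atTop (nhds 0) := by
  obtain rfl : f = fun y => ∫ p in Icc 0 1, fIntegrand y p ∂Λ := funext hf
  have hint := integrableOn_fIntegrand (integrableOn_inv_of_lintegral_lt_top hdust)
  have hIoc : Λ (Ioc 0 1) ≠ 0 := measure_Ioc_zero_one_ne_zero hΛ hsupp
    (measure_singleton_zero_of_lintegral_inv_lt_top (left_mem_Icc.2 zero_le_one) hdust)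
  exact ⟨hint, integral_fIntegrand_pos hint hIoc, antitone_integral_fIntegrand hint,
    continuous_integral_fIntegrand hint, tendsto_integral_fIntegrand_atTop hint⟩

/-- Let `Λ` be a finite, non-zero measure on `[0,1]` satisfying the dust condition
`∫_{[0,1]} p⁻¹ Λ(dp) < ∞` (with `p⁻¹ = ∞` at `p = 0`), and define
`f y := ∫_{[0,1]} (1 - (1-p)^(e^y)) e^{-y} p⁻² Λ(dp)`.  Then `f y` is finite for every
`y` (i.e. the integrand is integrable), `f` is positive, nonincreasing and continuous
on `ℝ`, and `f y → 0` as `y → ∞`. -/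
theorem f_properties
    (Λ : Measure ℝ) [IsFiniteMeasure Λ] (hΛ : Λ ≠ 0) (hsupp : Λ (Icc (0 : ℝ) 1)ᶜ = 0)
    (hdust : (∫⁻ p in Icc (0 : ℝ) 1, (ENNReal.ofReal p)⁻¹ ∂Λ) < ⊤)
    (f : ℝ → ℝ)
    (hf : ∀ y : ℝ,
      f y = ∫ p in Icc (0 : ℝ) 1, (1 - (1 - p) ^ Real.exp y) / Real.exp y / p ^ 2 ∂Λ) :
    (∀ y : ℝ,
        IntegrableOn (fun p : ℝ => (1 - (1 - p) ^ Real.exp y) / Real.exp y / p ^ 2)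
          (Icc (0 : ℝ) 1) Λ) ∧
      (∀ y : ℝ, 0 < f y) ∧ Antitone f ∧ Continuous f ∧ Tendsto f atTop (nhds 0) :=
  f_properties_general Λ hΛ hsupp hdust f hf
end

section
/- Let Λ be a finite, non-zero measure on [0,1] and set μ := ∫_{[0,1]} log(1/(1−p)) p^{−2} Λ(dp) (with the conventions that the integrand is +∞ at p = 0 and p = 1). Then μ < ∞ if and only if both ∫_{[0,1]} p^{−1} Λ(dp) < ∞ and ∫_{[0,1]} log(1/(1−p)) Λ(dp) < ∞. -/
open MeasureTheory Filter Set
open scoped ENNReal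

noncomputable def muF (p : ℝ) : ℝ≥0∞ :=
  if p = 0 ∨ p = 1 then ⊤ else ENNReal.ofReal (Real.log (1 / (1 - p)) / p ^ 2)

noncomputable def muG (p : ℝ) : ℝ≥0∞ := (ENNReal.ofReal p)⁻¹

noncomputable def muH (p : ℝ) : ℝ≥0∞ :=
  if p = 1 then ⊤ else ENNReal.ofReal (Real.log (1 / (1 - p)))

lemma mu_log_ge {p : ℝ} (h0 : 0 < p) (h1 : p < 1) : p ≤ Real.log (1 / (1 - p)) := by
  rw [one_div, Real.log_inv]
  have := Real.log_le_sub_one_of_pos (by linarith : (0:ℝ) < 1 - p)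
  linarith

lemma mu_log_nonneg {p : ℝ} (h0 : 0 ≤ p) (h1 : p < 1) : 0 ≤ Real.log (1 / (1 - p)) := by
  apply Real.log_nonneg
  rw [le_div_iff₀ (by linarith)]
  linarith

lemma mu_log_le {p : ℝ} (h0 : 0 < p) (h2 : p ≤ 1/2) : Real.log (1 / (1 - p)) ≤ 2 * p := by
  have h1 : (0:ℝ) < 1 - p := by linarith
  have hle : 1 / (1 - p) ≤ 1 + 2 * p := by
    rw [div_le_iff₀ h1]; nlinarith
  calc Real.log (1 / (1 - p)) ≤ Real.log (1 + 2 * p) :=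
        Real.log_le_log (by positivity) hle
    _ ≤ (1 + 2 * p) - 1 := Real.log_le_sub_one_of_pos (by linarith)
    _ = 2 * p := by ring

lemma muG_le_muF {p : ℝ} (hp : p ∈ Icc (0:ℝ) 1) : muG p ≤ muF p := by
  obtain ⟨hp0, hp1⟩ := hp
  by_cases h1 : p = 1
  · simp [muF, h1]
  by_cases h0 : p = 0
  · simp [muF, muG, h0]
  have hp0' : 0 < p := lt_of_le_of_ne hp0 (Ne.symm h0)
  have hp1' : p < 1 := lt_of_le_of_ne hp1 h1
  unfold muF muG
  rw [if_neg (by tauto), ← ENNReal.ofReal_inv_of_pos hp0', ← one_div]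
  apply ENNReal.ofReal_le_ofReal
  have h := mu_log_ge hp0' hp1'
  have hpp : p / p ^ 2 = 1 / p := by field_simp
  calc 1 / p = p / p ^ 2 := hpp.symm
    _ ≤ Real.log (1 / (1 - p)) / p ^ 2 := by gcongr

lemma muH_le_muF {p : ℝ} (hp : p ∈ Icc (0:ℝ) 1) : muH p ≤ muF p := by
  obtain ⟨hp0, hp1⟩ := hp
  by_cases h1 : p = 1
  · simp [muF, muH, h1]
  by_cases h0 : p = 0
  · simp [muH, h0]
  have hp0' : 0 < p := lt_of_le_of_ne hp0 (Ne.symm h0)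
  have hp1' : p < 1 := lt_of_le_of_ne hp1 h1
  unfold muF muH
  rw [if_neg h1, if_neg (show ¬(p = 0 ∨ p = 1) by tauto)]
  apply ENNReal.ofReal_le_ofReal
  rw [le_div_iff₀ (by positivity)]
  have hlog0 := mu_log_nonneg hp0 hp1'
  have hsq : p ^ 2 ≤ 1 := by nlinarith
  nlinarith [mul_le_mul_of_nonneg_left hsq hlog0]

lemma muF_le {p : ℝ} (hp : p ∈ Icc (0:ℝ) 1) : muF p ≤ 2 * muG p + 4 * muH p := by
  obtain ⟨hp0, hp1⟩ := hp
  by_cases h0 : p = 0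
  · simp [muG, h0]
  by_cases h1 : p = 1
  · simp [muH, h1]
  have hp0' : 0 < p := lt_of_le_of_ne hp0 (Ne.symm h0)
  have hp1' : p < 1 := lt_of_le_of_ne hp1 h1
  have hlog0 := mu_log_nonneg hp0 hp1'
  unfold muF muG muH
  rw [if_neg (by tauto), if_neg h1,
    ← ENNReal.ofReal_inv_of_pos hp0', ← one_div]
  rw [show (2 : ℝ≥0∞) = ENNReal.ofReal 2 by norm_num,
    show (4 : ℝ≥0∞) = ENNReal.ofReal 4 by norm_num,
    ← ENNReal.ofReal_mul (by norm_num), ← ENNReal.ofReal_mul (by norm_num),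
    ← ENNReal.ofReal_add (by positivity) (by positivity)]
  apply ENNReal.ofReal_le_ofReal
  have hinv : 2 * (1 / p) * p ^ 2 = 2 * p := by field_simp
  rw [div_le_iff₀ (by positivity)]
  rcases le_or_gt p (1/2) with hh | hh
  · have := mu_log_le hp0' hh
    nlinarith [mul_nonneg hlog0 (sq_nonneg p)]
  · have hsq : (1:ℝ)/4 ≤ p ^ 2 := by nlinarith
    nlinarith [mul_nonneg hlog0 (sq_nonneg p), hp0'.le]

lemma muG_meas : Measurable muG :=
  (ENNReal.measurable_ofReal.comp measurable_id).inv

lemma muH_meas : Measurable muH := by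
  unfold muH
  exact Measurable.ite (measurableSet_eq) measurable_const
    (ENNReal.measurable_ofReal.comp ((measurable_const.sub measurable_id).const_div 1 |>.log))

/-- Let `Λ` be a finite non-zero measure on `[0,1]` and set
`μ := ∫_{[0,1]} log(1/(1-p)) p⁻² Λ(dp)`, with the convention that the integrand is `+∞`
at `p = 0` and `p = 1`.  Then `μ < ∞` iff both `∫_{[0,1]} p⁻¹ Λ(dp) < ∞`
(where `p⁻¹ = ∞` at `p = 0`) and `∫_{[0,1]} log(1/(1-p)) Λ(dp) < ∞`
(where `log(1/(1-p)) = ∞` at `p = 1`). -/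
theorem mu_finite_iff
    (Λ : Measure ℝ) [IsFiniteMeasure Λ] (hΛ : Λ ≠ 0) (hsupp : Λ (Icc (0 : ℝ) 1)ᶜ = 0) :
    (∫⁻ p in Icc (0 : ℝ) 1,
        (if p = 0 ∨ p = 1 then ⊤ else ENNReal.ofReal (Real.log (1 / (1 - p)) / p ^ 2)) ∂Λ) < ⊤ ↔
      ((∫⁻ p in Icc (0 : ℝ) 1, (ENNReal.ofReal p)⁻¹ ∂Λ) < ⊤ ∧
        (∫⁻ p in Icc (0 : ℝ) 1,
          (if p = 1 then ⊤ else ENNReal.ofReal (Real.log (1 / (1 - p)))) ∂Λ) < ⊤) := by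
  show (∫⁻ p in Icc (0:ℝ) 1, muF p ∂Λ) < ⊤ ↔
    ((∫⁻ p in Icc (0:ℝ) 1, muG p ∂Λ) < ⊤ ∧ (∫⁻ p in Icc (0:ℝ) 1, muH p ∂Λ) < ⊤)
  constructor
  · intro hF
    constructor
    · exact lt_of_le_of_lt (setLIntegral_mono' measurableSet_Icc fun p hp => muG_le_muF hp) hF
    · exact lt_of_le_of_lt (setLIntegral_mono' measurableSet_Icc fun p hp => muH_le_muF hp) hF
  · rintro ⟨hG, hH⟩
    have hle : (∫⁻ p in Icc (0:ℝ) 1, muF p ∂Λ) ≤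
        ∫⁻ p in Icc (0:ℝ) 1, (2 * muG p + 4 * muH p) ∂Λ :=
      setLIntegral_mono' measurableSet_Icc fun p hp => muF_le hp
    have heq : (∫⁻ p in Icc (0:ℝ) 1, (2 * muG p + 4 * muH p) ∂Λ) =
        2 * (∫⁻ p in Icc (0:ℝ) 1, muG p ∂Λ) + 4 * (∫⁻ p in Icc (0:ℝ) 1, muH p ∂Λ) := by
      rw [lintegral_add_left (muG_meas.const_mul 2), lintegral_const_mul 2 muG_meas,
        lintegral_const_mul 4 muH_meas]
    refine lt_of_le_of_lt hle ?_
    rw [heq]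
    exact ENNReal.add_lt_top.2 ⟨ENNReal.mul_lt_top (by simp) hG,
      ENNReal.mul_lt_top (by simp) hH⟩
end

section
/- Let μ > 0 and let f : ℝ → ℝ be a positive, nonincreasing, continuous function with f(y) → 0 as y → ∞, and let κ ≥ 0 be such that f(y) ≤ μ/2 for all y ≥ κ. Then, as z → ∞, ∫_κ^z dy/(μ − f(y)) = z/μ + ((1 + o(1))/μ²) ∫_κ^z f(y) dy + O(1); that is, the difference ∫_κ^z dy/(μ − f(y)) − z/μ − (1/μ²)∫_κ^z f(y) dy is the sum of a term that is o(∫_κ^z f(y) dy) and a term that stays bounded as z → ∞. -/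
open MeasureTheory Filter Set Asymptotics

/-- Let `μ > 0`, let `f : ℝ → ℝ` be positive, nonincreasing, continuous with `f y → 0`
as `y → ∞`, and let `κ ≥ 0` be such that `f y ≤ μ/2` for all `y ≥ κ`.  Then, as `z → ∞`,
`∫_κ^z dy/(μ - f y) = z/μ + ((1 + o(1))/μ²) ∫_κ^z f(y) dy + O(1)`; i.e. the difference
`∫_κ^z dy/(μ - f y) - z/μ - (1/μ²)∫_κ^z f(y) dy` is the sum of a term which is
`o(∫_κ^z f(y) dy)` and a term which stays bounded as `z → ∞`. -/
theorem beta_expansion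
    (μ : ℝ) (hμ : 0 < μ)
    (f : ℝ → ℝ) (hfpos : ∀ y, 0 < f y) (hfanti : Antitone f) (hfcont : Continuous f)
    (hflim : Tendsto f atTop (nhds 0))
    (κ : ℝ) (hκ0 : 0 ≤ κ) (hκ : ∀ y ≥ κ, f y ≤ μ / 2) :
    ∃ g h : ℝ → ℝ,
      (∀ z : ℝ,
        (∫ y in κ..z, 1 / (μ - f y)) - z / μ - (1 / μ ^ 2) * ∫ y in κ..z, f y =
          g z + h z) ∧
      g =o[atTop] (fun z => ∫ y in κ..z, f y) ∧
      h =O[atTop] (fun _ : ℝ => (1 : ℝ)) := by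
  have hμ0 : μ ≠ 0 := hμ.ne'
  set q : ℝ → ℝ := fun y => (f y)^2 / (μ^2 * (μ - f y)) with hqdef
  set F : ℝ → ℝ := fun z => ∫ y in κ..z, f y with hFdef
  set E : ℝ → ℝ := fun z => ∫ y in κ..z, q y with hEdef
  have hsub : ∀ y, κ ≤ y → μ/2 ≤ μ - f y := fun y hy => by linarith [hκ y hy]
  have hsubpos : ∀ y, κ ≤ y → 0 < μ - f y := fun y hy =>
    lt_of_lt_of_le (by linarith) (hsub y hy)
  have hcont1 : ContinuousOn (fun y => 1/(μ - f y)) (Ici κ) :=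
    ContinuousOn.div continuousOn_const (continuous_const.sub hfcont).continuousOn
      (fun y hy => (hsubpos y hy).ne')
  have hcontq : ContinuousOn q (Ici κ) := by
    apply ContinuousOn.div (hfcont.pow 2).continuousOn
      (continuousOn_const.mul (continuous_const.sub hfcont).continuousOn)
    intro y hy
    exact (mul_pos (pow_pos hμ 2) (hsubpos y hy)).ne'
  have hsubIcc : ∀ a b : ℝ, κ ≤ a → Set.uIcc a b ⊆ Set.Ici κ ∨ True := fun _ _ _ => Or.inr trivial
  have huIcc : ∀ {a b : ℝ}, κ ≤ a → a ≤ b → Set.uIcc a b ⊆ Set.Ici κ := by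
    intro a b ha hab
    rw [Set.uIcc_of_le hab]
    exact fun y hy => le_trans ha hy.1
  have hIq : ∀ {a b : ℝ}, κ ≤ a → a ≤ b → IntervalIntegrable q volume a b :=
    fun {a b} ha hab => (hcontq.mono (huIcc ha hab)).intervalIntegrable
  have hIf : ∀ a b : ℝ, IntervalIntegrable f volume a b := fun a b =>
    hfcont.intervalIntegrable a b
  -- pointwise bounds
  have hq0 : ∀ y, κ ≤ y → 0 ≤ q y := by
    intro y hy
    exact div_nonneg (sq_nonneg _) (mul_pos (pow_pos hμ 2) (hsubpos y hy)).le
  have hqf : ∀ y, κ ≤ y → q y ≤ (1/μ^2) * f y := by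
    intro y hy
    rw [hqdef]
    have h1 : 0 < μ^2 * (μ - f y) := mul_pos (pow_pos hμ 2) (hsubpos y hy)
    rw [div_le_iff₀ h1]
    have h2 : 0 ≤ μ - 2 * f y := by linarith [hκ y hy]
    have h3 := (hfpos y).le
    have heq : 1/μ^2 * f y * (μ^2 * (μ - f y)) = f y * (μ - f y) := by
      field_simp
    rw [heq]
    nlinarith [mul_nonneg h3 h2]
  -- key identity
  have keyA : ∀ z, κ ≤ z →
      (∫ y in κ..z, 1 / (μ - f y)) - z / μ - (1/μ^2) * F z + κ/μ = E z := by
    intro z hz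
    have hsb := huIcc (le_refl κ) hz
    have i1 : IntervalIntegrable (fun y => 1/(μ - f y)) volume κ z :=
      (hcont1.mono hsb).intervalIntegrable
    have i2 : IntervalIntegrable (fun _ : ℝ => 1/μ) volume κ z := intervalIntegrable_const
    have i3 : IntervalIntegrable (fun y => (1/μ^2) * f y) volume κ z :=
      (hIf κ z).const_mul _
    have e1 : z/μ - κ/μ = ∫ _ in κ..z, 1/μ := by
      rw [intervalIntegral.integral_const]
      simp [smul_eq_mul]
      ring
    have e2 : (1/μ^2) * F z = ∫ y in κ..z, (1/μ^2) * f y :=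
      (intervalIntegral.integral_const_mul _ _).symm
    have e3 : (∫ y in κ..z, 1/(μ - f y)) - (∫ _ in κ..z, (1:ℝ)/μ)
        - (∫ y in κ..z, (1/μ^2) * f y)
        = ∫ y in κ..z, (1/(μ - f y) - 1/μ - (1/μ^2) * f y) := by
      rw [intervalIntegral.integral_sub (i1.sub i2) i3, intervalIntegral.integral_sub i1 i2]
    have e4 : (∫ y in κ..z, (1/(μ - f y) - 1/μ - (1/μ^2) * f y)) = E z := by
      apply intervalIntegral.integral_congr
      intro y hy
      have hyκ : κ ≤ y := (hsb hy)
      have h1 : μ - f y ≠ 0 := (hsubpos y hyκ).ne'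
      have h2 : μ^2 * (μ - f y) ≠ 0 := mul_ne_zero (pow_ne_zero 2 hμ0) h1
      show _ = f y ^ 2 / (μ ^ 2 * (μ - f y))
      rw [eq_div_iff h2]
      field_simp
      ring
    have : (∫ y in κ..z, 1 / (μ - f y)) - z / μ - (1/μ^2) * F z + κ/μ
        = (∫ y in κ..z, 1/(μ - f y)) - (z/μ - κ/μ) - (1/μ^2) * F z := by ring
    rw [this, e1, e2, e3, e4]
  -- monotonicity and nonnegativity of F
  have hFmono : Monotone F := by
    intro a b hab
    have h1 : F b = F a + ∫ y in a..b, f y :=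
      (intervalIntegral.integral_add_adjacent_intervals (hIf κ a) (hIf a b)).symm
    have h2 : 0 ≤ ∫ y in a..b, f y :=
      intervalIntegral.integral_nonneg hab (fun y _ => (hfpos y).le)
    simp only [hFdef] at h1 ⊢
    linarith
  have hF0 : ∀ z, κ ≤ z → 0 ≤ F z := by
    intro z hz
    have : F κ = 0 := intervalIntegral.integral_same
    have := hFmono hz
    linarith
  have hE0 : ∀ z, κ ≤ z → 0 ≤ E z := fun z hz =>
    intervalIntegral.integral_nonneg hz (fun y hy => hq0 y hy.1)
  have hEF : ∀ z, κ ≤ z → E z ≤ (1/μ^2) * F z := by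
    intro z hz
    rw [hEdef, hFdef]
    calc (∫ y in κ..z, q y) ≤ ∫ y in κ..z, (1/μ^2) * f y := by
          apply intervalIntegral.integral_mono_on hz (hIq le_rfl hz) ((hIf κ z).const_mul _)
          intro y hy
          exact hqf y hy.1
      _ = (1/μ^2) * ∫ y in κ..z, f y := intervalIntegral.integral_const_mul _ _
  by_cases hbdd : BddAbove (Set.range F)
  · -- bounded case
    obtain ⟨C, hC⟩ := hbdd
    refine ⟨fun _ => 0, fun z =>
      (∫ y in κ..z, 1 / (μ - f y)) - z / μ - (1 / μ ^ 2) * ∫ y in κ..z, f y,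
      fun z => by ring, isLittleO_zero _ _, ?_⟩
    rw [Asymptotics.isBigO_iff]
    refine ⟨(1/μ^2) * C + κ/μ, ?_⟩
    filter_upwards [eventually_ge_atTop κ] with z hz
    have h1 := keyA z hz
    have h2 := hE0 z hz
    have h3 := hEF z hz
    have h4 : F z ≤ C := hC (Set.mem_range_self z)
    have h5 : 0 ≤ κ/μ := div_nonneg hκ0 hμ.le
    have h6 : (1/μ^2) * F z ≤ (1/μ^2) * C :=
      mul_le_mul_of_nonneg_left h4 (by positivity)
    simp only [norm_one, mul_one, Real.norm_eq_abs]
    rw [abs_le]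
    constructor <;> [skip; skip] <;> · simp only [hFdef] at h1 ⊢; linarith
  · -- unbounded case
    have hFtop : Tendsto F atTop atTop := tendsto_atTop_atTop_of_monotone' hFmono hbdd
    refine ⟨fun z => (∫ y in κ..z, 1 / (μ - f y)) - z / μ
        - (1 / μ ^ 2) * (∫ y in κ..z, f y) + κ/μ,
      fun _ => -(κ/μ), fun z => by ring, ?_, ?_⟩
    · rw [Asymptotics.isLittleO_iff]
      intro c hc
      have hδ : (0:ℝ) < c * μ^3 / 4 := by positivity
      obtain ⟨T₀, hT₀⟩ := eventually_atTop.mp (hflim.eventually_lt_const hδ)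
      set T : ℝ := max T₀ κ with hTdef
      have hTκ : κ ≤ T := le_max_right _ _
      have hqcf : ∀ y, T ≤ y → q y ≤ (c/2) * f y := by
        intro y hy
        have hyκ : κ ≤ y := le_trans hTκ hy
        have h1 : 0 < μ^2 * (μ - f y) := mul_pos (pow_pos hμ 2) (hsubpos y hyκ)
        rw [hqdef, div_le_iff₀ h1]
        have h2 : f y < c * μ^3 / 4 := hT₀ y (le_trans (le_max_left _ _) hy)
        have h3 : μ/2 ≤ μ - f y := hsub y hyκ
        have h4 : 0 < f y := hfpos y
        nlinarith [mul_le_mul_of_nonneg_left h3 (le_of_lt (by positivity : (0:ℝ) < c/2 * f y * μ^2)),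
          mul_lt_mul_of_pos_left h2 h4]
      filter_upwards [eventually_ge_atTop T, hFtop.eventually_ge_atTop ((2/c) * E T),
        eventually_ge_atTop κ] with z hzT hzF hzκ
      have hEsplit : E z = E T + ∫ y in T..z, q y :=
        (intervalIntegral.integral_add_adjacent_intervals (hIq le_rfl hTκ)
          ((hcontq.mono (huIcc hTκ hzT)).intervalIntegrable)).symm
      have hint1 : (∫ y in T..z, q y) ≤ ∫ y in T..z, (c/2) * f y := by
        apply intervalIntegral.integral_mono_on hzT
          ((hcontq.mono (huIcc hTκ hzT)).intervalIntegrable) ((hIf T z).const_mul _)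
        intro y hy
        exact hqcf y hy.1
      have hint2 : (∫ y in T..z, (c/2) * f y) = (c/2) * (F z - F T) := by
        rw [intervalIntegral.integral_const_mul]
        congr 1
        have := intervalIntegral.integral_add_adjacent_intervals (hIf κ T) (hIf T z)
        simp only [hFdef]
        linarith
      have hFT : 0 ≤ F T := hF0 T hTκ
      have hET : E T ≤ (c/2) * F z := by
        have hc2 : (0:ℝ) < c/2 := by positivity
        have h := mul_le_mul_of_nonneg_left hzF hc2.le
        have he : c/2 * (2/c) = 1 := by field_simp
        calc E T = (c/2 * (2/c)) * E T := by rw [he, one_mul]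
          _ = c/2 * (2/c * E T) := by ring
          _ ≤ c/2 * F z := h
      have hEz : E z ≤ c * F z := by
        rw [hEsplit]
        have := hint1
        rw [hint2] at this
        nlinarith
      have hgz : (∫ y in κ..z, 1 / (μ - f y)) - z / μ
          - (1 / μ ^ 2) * (∫ y in κ..z, f y) + κ/μ = E z := keyA z hzκ
      rw [hgz]
      rw [Real.norm_eq_abs, Real.norm_eq_abs, abs_of_nonneg (hE0 z hzκ),
        abs_of_nonneg (hF0 z hzκ)]
      exact hEz
    · exact (isBigO_const_const _ one_ne_zero _)
end

section
/- Let Λ be a finite measure on [0,1] with ∫_{[0,1]} p^{−1} Λ(dp) < ∞ and let f(y) := ∫_{[0,1]} (1 − (1−p)^{e^y}) e^{−y} p^{−2} Λ(dp). Then for every 0 < r < 1 and every α > 0, f(log(1/r)) ≤ ∫_{[0, r^α]} p^{−1} Λ(dp) + r^{1−α} ∫_{[0,1]} p^{−1} Λ(dp). -/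
open MeasureTheory Filter Set

/-- Let `Λ` be a finite measure on `[0,1]` with `∫_{[0,1]} p⁻¹ Λ(dp) < ∞` and let
`f y := ∫_{[0,1]} (1 - (1-p)^(e^y)) e^{-y} p⁻² Λ(dp)`.  Then for every `0 < r < 1` and
every `α > 0`,
`f(log(1/r)) ≤ ∫_{[0,r^α]} p⁻¹ Λ(dp) + r^{1-α} ∫_{[0,1]} p⁻¹ Λ(dp)`. -/
theorem f_upper_estimate
    (Λ : Measure ℝ) [IsFiniteMeasure Λ] (hsupp : Λ (Icc (0 : ℝ) 1)ᶜ = 0)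
    (hdust : (∫⁻ p in Icc (0 : ℝ) 1, (ENNReal.ofReal p)⁻¹ ∂Λ) < ⊤)
    (f : ℝ → ℝ)
    (hf : ∀ y : ℝ,
      f y = ∫ p in Icc (0 : ℝ) 1, (1 - (1 - p) ^ Real.exp y) / Real.exp y / p ^ 2 ∂Λ)
    (r α : ℝ) (hr0 : 0 < r) (hr1 : r < 1) (hα : 0 < α) :
    f (Real.log (1 / r)) ≤
      (∫⁻ p in Icc (0 : ℝ) (r ^ α), (ENNReal.ofReal p)⁻¹ ∂Λ).toReal +
        r ^ (1 - α) * (∫⁻ p in Icc (0 : ℝ) 1, (ENNReal.ofReal p)⁻¹ ∂Λ).toReal := by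
  have hrα0 : 0 < r ^ α := Real.rpow_pos_of_pos hr0 α
  have hrα1 : r ^ α ≤ 1 := Real.rpow_le_one hr0.le hr1.le hα.le
  set y := Real.log (1 / r) with hy
  have hcpos : 0 < Real.exp y := Real.exp_pos y
  have hc : Real.exp y = 1 / r := Real.exp_log (by positivity)
  have hc1 : 1 ≤ Real.exp y := by
    rw [hc, le_div_iff₀ hr0, one_mul]; exact hr1.le
  set g : ℝ → ℝ := fun p => (1 - (1 - p) ^ Real.exp y) / Real.exp y / p ^ 2 with hgdef
  have hgm : Measurable g := by
    rw [hgdef]; fun_prop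
  have hg_nonneg : ∀ p ∈ Icc (0:ℝ) 1, 0 ≤ g p := by
    intro p hp
    have h1 : (1 - p) ^ Real.exp y ≤ 1 :=
      Real.rpow_le_one (by linarith [hp.2]) (by linarith [hp.1]) hcpos.le
    exact div_nonneg (div_nonneg (by linarith) hcpos.le) (sq_nonneg p)
  have key : f y = (∫⁻ p in Icc (0:ℝ) 1, ENNReal.ofReal (g p) ∂Λ).toReal := by
    rw [hf y]
    exact integral_eq_lintegral_of_nonneg_ae
      ((ae_restrict_iff' measurableSet_Icc).2 (ae_of_all _ hg_nonneg))
      hgm.aestronglyMeasurable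
  set A := ∫⁻ p in Icc (0:ℝ) (r ^ α), (ENNReal.ofReal p)⁻¹ ∂Λ with hA
  set B := ∫⁻ p in Icc (0:ℝ) 1, (ENNReal.ofReal p)⁻¹ ∂Λ with hB
  have hAB : A ≤ B :=
    lintegral_mono' (Measure.restrict_mono (Icc_subset_Icc_right hrα1) le_rfl) le_rfl
  have hAfin : A ≠ ⊤ := (lt_of_le_of_lt hAB hdust).ne
  -- splitting the domain
  have hdisj : Disjoint (Icc (0:ℝ) (r ^ α)) (Ioc (r ^ α) 1) := by
    rw [Set.disjoint_left]
    intro x hx hx'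
    exact absurd hx.2 (not_le.2 hx'.1)
  have hsplit : ∫⁻ p in Icc (0:ℝ) 1, ENNReal.ofReal (g p) ∂Λ =
      (∫⁻ p in Icc (0:ℝ) (r ^ α), ENNReal.ofReal (g p) ∂Λ) +
      (∫⁻ p in Ioc (r ^ α) 1, ENNReal.ofReal (g p) ∂Λ) := by
    rw [← lintegral_union measurableSet_Ioc hdisj, Icc_union_Ioc_eq_Icc hrα0.le hrα1]
  -- bound on [0, r^α]
  have hbound1 : ∀ p ∈ Icc (0:ℝ) (r ^ α), ENNReal.ofReal (g p) ≤ (ENNReal.ofReal p)⁻¹ := by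
    intro p hp
    rcases eq_or_lt_of_le hp.1 with h0 | h0
    · rw [← h0]; simp
    · have hp1 : p ≤ 1 := hp.2.trans hrα1
      have bern : 1 - Real.exp y * p ≤ (1 - p) ^ Real.exp y := by
        have h := one_add_mul_self_le_rpow_one_add (show (-1:ℝ) ≤ -p by linarith) hc1
        have e : (1:ℝ) + -p = 1 - p := by ring
        rw [e] at h
        linarith
      have h2 : (1 - (1 - p) ^ Real.exp y) / Real.exp y ≤ p := by
        rw [div_le_iff₀ hcpos]
        nlinarith
      have h3 : g p ≤ p / p ^ 2 :=
        div_le_div_of_nonneg_right h2 (sq_nonneg p)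
      have h4 : p / p ^ 2 = 1 / p := by
        rw [pow_two, div_mul_eq_div_div, div_self h0.ne']
      calc ENNReal.ofReal (g p) ≤ ENNReal.ofReal (1 / p) :=
            ENNReal.ofReal_le_ofReal (h3.trans_eq h4)
        _ = (ENNReal.ofReal p)⁻¹ := by
            rw [one_div, ENNReal.ofReal_inv_of_pos h0]
  have hB1 : ∫⁻ p in Icc (0:ℝ) (r ^ α), ENNReal.ofReal (g p) ∂Λ ≤ A :=
    setLIntegral_mono' measurableSet_Icc hbound1
  -- bound on (r^α, 1]
  have hbound2 : ∀ p ∈ Ioc (r ^ α) 1, ENNReal.ofReal (g p) ≤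
      ENNReal.ofReal (r ^ (1 - α)) * (ENNReal.ofReal p)⁻¹ := by
    intro p hp
    have hp0 : 0 < p := hrα0.trans hp.1
    have hnum : 1 - (1 - p) ^ Real.exp y ≤ 1 := by
      have := Real.rpow_nonneg (by linarith [hp.2] : (0:ℝ) ≤ 1 - p) (Real.exp y)
      linarith
    have hgle : g p ≤ r / p ^ 2 := by
      have h1 : (1 - (1 - p) ^ Real.exp y) / Real.exp y ≤ r := by
        have hre : r * Real.exp y = 1 := by
          rw [hc]; field_simp
        rw [div_le_iff₀ hcpos, hre]
        exact hnum
      exact div_le_div_of_nonneg_right h1 (sq_nonneg p)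
    have hrp : r / p ≤ r ^ (1 - α) := by
      rw [div_le_iff₀ hp0]
      calc r = r ^ (1 - α) * r ^ α := by
            rw [← Real.rpow_add hr0]; norm_num
        _ ≤ r ^ (1 - α) * p :=
            mul_le_mul_of_nonneg_left hp.1.le (Real.rpow_nonneg hr0.le _)
    have hfinal : g p ≤ r ^ (1 - α) * (1 / p) := by
      calc g p ≤ r / p ^ 2 := hgle
        _ = (r / p) * (1 / p) := by rw [pow_two]; field_simp
        _ ≤ r ^ (1 - α) * (1 / p) := by
            apply mul_le_mul_of_nonneg_right hrp
            positivity
    calc ENNReal.ofReal (g p) ≤ ENNReal.ofReal (r ^ (1 - α) * (1 / p)) :=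
          ENNReal.ofReal_le_ofReal hfinal
      _ = ENNReal.ofReal (r ^ (1 - α)) * (ENNReal.ofReal p)⁻¹ := by
          rw [ENNReal.ofReal_mul (Real.rpow_nonneg hr0.le _), one_div,
            ENNReal.ofReal_inv_of_pos hp0]
  have hB2 : ∫⁻ p in Ioc (r ^ α) 1, ENNReal.ofReal (g p) ∂Λ ≤
      ENNReal.ofReal (r ^ (1 - α)) * B := by
    calc ∫⁻ p in Ioc (r ^ α) 1, ENNReal.ofReal (g p) ∂Λ
        ≤ ∫⁻ p in Ioc (r ^ α) 1, ENNReal.ofReal (r ^ (1 - α)) * (ENNReal.ofReal p)⁻¹ ∂Λ :=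
          setLIntegral_mono' measurableSet_Ioc hbound2
      _ = ENNReal.ofReal (r ^ (1 - α)) * ∫⁻ p in Ioc (r ^ α) 1, (ENNReal.ofReal p)⁻¹ ∂Λ :=
          lintegral_const_mul' _ _ ENNReal.ofReal_ne_top
      _ ≤ ENNReal.ofReal (r ^ (1 - α)) * B := by
          apply mul_le_mul_right
          apply lintegral_mono'
          · apply Measure.restrict_mono _ le_rfl
            intro x hx
            exact ⟨hrα0.le.trans hx.1.le, hx.2⟩
          · exact le_rfl
  have total : ∫⁻ p in Icc (0:ℝ) 1, ENNReal.ofReal (g p) ∂Λ ≤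
      A + ENNReal.ofReal (r ^ (1 - α)) * B := by
    rw [hsplit]; exact add_le_add hB1 hB2
  have hmulfin : ENNReal.ofReal (r ^ (1 - α)) * B ≠ ⊤ :=
    ENNReal.mul_ne_top ENNReal.ofReal_ne_top hdust.ne
  have hsumfin : A + ENNReal.ofReal (r ^ (1 - α)) * B ≠ ⊤ :=
    ENNReal.add_ne_top.2 ⟨hAfin, hmulfin⟩
  calc f y = (∫⁻ p in Icc (0:ℝ) 1, ENNReal.ofReal (g p) ∂Λ).toReal := key
    _ ≤ (A + ENNReal.ofReal (r ^ (1 - α)) * B).toReal := ENNReal.toReal_mono hsumfin total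
    _ = A.toReal + (ENNReal.ofReal (r ^ (1 - α)) * B).toReal := ENNReal.toReal_add hAfin hmulfin
    _ = A.toReal + r ^ (1 - α) * B.toReal := by
        rw [ENNReal.toReal_mul, ENNReal.toReal_ofReal (Real.rpow_nonneg hr0.le _)]
end

section
/- Let Λ be a finite measure on [0,1] with ∫_{[0,1]} p^{−1} Λ(dp) < ∞ and let f(y) := ∫_{[0,1]} (1 − (1−p)^{e^y}) e^{−y} p^{−2} Λ(dp). Then for every 0 < r < 1 and every β > 0, f(log(1/r)) ≥ exp(−r^{β−1}) ∫_{[0, r^β]} p^{−1} Λ(dp). -/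
open MeasureTheory Filter Set

/-- Let `Λ` be a finite measure on `[0,1]` with `∫_{[0,1]} p⁻¹ Λ(dp) < ∞` and let
`f y := ∫_{[0,1]} (1 - (1-p)^(e^y)) e^{-y} p⁻² Λ(dp)`.  Then for every `0 < r < 1` and
every `β > 0`, `f(log(1/r)) ≥ exp(-r^{β-1}) ∫_{[0,r^β]} p⁻¹ Λ(dp)`. -/
theorem f_lower_estimate
    (Λ : Measure ℝ) [IsFiniteMeasure Λ] (hsupp : Λ (Icc (0 : ℝ) 1)ᶜ = 0)
    (hdust : (∫⁻ p in Icc (0 : ℝ) 1, (ENNReal.ofReal p)⁻¹ ∂Λ) < ⊤)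
    (f : ℝ → ℝ)
    (hf : ∀ y : ℝ,
      f y = ∫ p in Icc (0 : ℝ) 1, (1 - (1 - p) ^ Real.exp y) / Real.exp y / p ^ 2 ∂Λ)
    (r β : ℝ) (hr0 : 0 < r) (hr1 : r < 1) (hβ : 0 < β) :
    Real.exp (-(r ^ (β - 1))) *
        (∫⁻ p in Icc (0 : ℝ) (r ^ β), (ENNReal.ofReal p)⁻¹ ∂Λ).toReal ≤
      f (Real.log (1 / r)) := by
  have hrβ0 : (0:ℝ) < r ^ β := Real.rpow_pos_of_pos hr0 β
  have hrβ1 : r ^ β ≤ 1 := (Real.rpow_lt_one hr0.le hr1 hβ).le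
  set y := Real.log (1 / r) with hy
  have hey : Real.exp y = r⁻¹ := by
    rw [hy, Real.exp_log (by positivity), one_div]
  set c : ℝ := Real.exp (-(r ^ (β - 1))) with hc
  have hc0 : 0 ≤ c := (Real.exp_pos _).le
  set g : ℝ → ℝ := fun p => (1 - (1 - p) ^ Real.exp y) / Real.exp y / p ^ 2 with hg
  -- g as explicit formula
  have hgeq : ∀ p : ℝ, g p = (1 - (1 - p) ^ r⁻¹) * r / p ^ 2 := by
    intro p
    rw [hg]
    simp only [hey]
    rw [div_eq_mul_inv (1 - (1 - p) ^ r⁻¹) r⁻¹, inv_inv, div_eq_mul_inv]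
  -- measure of {0} is zero
  have h0 : Λ {(0:ℝ)} = 0 := by
    by_contra h
    have h1 : (∫⁻ p in {(0:ℝ)}, (ENNReal.ofReal p)⁻¹ ∂Λ) = ⊤ := by
      rw [lintegral_singleton]
      simp [ENNReal.top_mul h]
    have h2 : (∫⁻ p in {(0:ℝ)}, (ENNReal.ofReal p)⁻¹ ∂Λ) ≤
        ∫⁻ p in Icc (0:ℝ) 1, (ENNReal.ofReal p)⁻¹ ∂Λ :=
      lintegral_mono_set (by intro x hx; rw [mem_singleton_iff] at hx; subst hx
                             exact ⟨le_refl _, zero_le_one⟩)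
    rw [h1] at h2
    exact absurd (lt_of_le_of_lt h2 hdust) (lt_irrefl _)
  -- pointwise lower bound on (0, r^β]
  have hpoint : ∀ p : ℝ, p ∈ Icc (0:ℝ) (r ^ β) → p ≠ 0 →
      ENNReal.ofReal c * (ENNReal.ofReal p)⁻¹ ≤ ENNReal.ofReal (g p) := by
    intro p hp hp0
    have hp0' : 0 < p := lt_of_le_of_ne hp.1 (Ne.symm hp0)
    have hp1 : p ≤ 1 := le_trans hp.2 hrβ1
    rw [← ENNReal.ofReal_inv_of_pos hp0', ← ENNReal.ofReal_mul hc0]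
    apply ENNReal.ofReal_le_ofReal
    rw [hgeq p]
    -- key chain of inequalities
    have hexp1 : (1 - p) ^ r⁻¹ ≤ Real.exp (-(p / r)) := by
      have h1p : (1:ℝ) - p ≤ Real.exp (-p) := by
        have := Real.add_one_le_exp (-p); linarith
      calc (1 - p) ^ r⁻¹ ≤ (Real.exp (-p)) ^ r⁻¹ :=
            Real.rpow_le_rpow (by linarith) h1p (by positivity)
        _ = Real.exp (-(p / r)) := by
            rw [← Real.exp_mul]; ring_nf
    have hexp2 : (p / r) * Real.exp (-(p / r)) ≤ 1 - Real.exp (-(p / r)) := by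
      have h := Real.add_one_le_exp (p / r)
      have he : 0 < Real.exp (-(p / r)) := Real.exp_pos _
      have hmul : (p / r + 1) * Real.exp (-(p / r)) ≤ Real.exp (p / r) * Real.exp (-(p / r)) :=
        mul_le_mul_of_nonneg_right h he.le
      rw [← Real.exp_add] at hmul
      simp only [add_neg_cancel, Real.exp_zero] at hmul
      linarith
    have hexp3 : c ≤ Real.exp (-(p / r)) := by
      apply Real.exp_le_exp.mpr
      have : p / r ≤ r ^ (β - 1) := by
        rw [Real.rpow_sub hr0, Real.rpow_one]
        gcongr
        exact hp.2
      linarith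
    -- combine : c * p ≤ (1 - (1-p)^(r⁻¹)) * r
    have hkey : c * p ≤ (1 - (1 - p) ^ r⁻¹) * r := by
      calc c * p ≤ Real.exp (-(p / r)) * p := mul_le_mul_of_nonneg_right hexp3 hp0'.le
        _ = ((p / r) * Real.exp (-(p / r))) * r := by field_simp
        _ ≤ (1 - Real.exp (-(p / r))) * r := mul_le_mul_of_nonneg_right hexp2 hr0.le
        _ ≤ (1 - (1 - p) ^ r⁻¹) * r := by nlinarith
    rw [← div_eq_mul_inv, div_le_div_iff₀ hp0' (by positivity)]
    calc c * p ^ 2 = (c * p) * p := by ring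
      _ ≤ ((1 - (1 - p) ^ r⁻¹) * r) * p := mul_le_mul_of_nonneg_right hkey hp0'.le
      _ = (1 - (1 - p) ^ r⁻¹) * r * p := by ring
  -- upper bound : ofReal (g p) ≤ (ofReal p)⁻¹ on [0,1]
  have hupper : ∀ p : ℝ, p ∈ Icc (0:ℝ) 1 → ENNReal.ofReal (g p) ≤ (ENNReal.ofReal p)⁻¹ := by
    intro p hp
    rcases eq_or_lt_of_le hp.1 with h | h
    · have : g p = 0 := by
        rw [hgeq p, ← h]
        simp
      simp [this]
    · rw [← ENNReal.ofReal_inv_of_pos h]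
      apply ENNReal.ofReal_le_ofReal
      rw [hgeq p]
      have hrinv : (1:ℝ) ≤ r⁻¹ := (one_le_inv₀ hr0).mpr hr1.le
      have hb : 1 + r⁻¹ * (-p) ≤ (1 + (-p)) ^ r⁻¹ :=
        one_add_mul_self_le_rpow_one_add (by linarith [hp.2]) hrinv
      have hN : 1 - (1 - p) ^ r⁻¹ ≤ p / r := by
        rw [div_eq_inv_mul]
        have : (1:ℝ) + -p = 1 - p := by ring
        rw [this] at hb
        linarith
      have hNr : (1 - (1 - p) ^ r⁻¹) * r ≤ p := by
        have h2 := mul_le_mul_of_nonneg_right hN hr0.le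
        rwa [div_mul_cancel₀ _ hr0.ne'] at h2
      calc (1 - (1 - p) ^ r⁻¹) * r / p ^ 2 ≤ p / p ^ 2 := by gcongr
          _ = p⁻¹ := by rw [pow_two, ← div_div, div_self h.ne', one_div]
  -- nonnegativity of g on [0,1]
  have hnn : ∀ p : ℝ, p ∈ Icc (0:ℝ) 1 → 0 ≤ g p := by
    intro p hp
    rw [hgeq p]
    have : (1 - p) ^ r⁻¹ ≤ 1 :=
      Real.rpow_le_one (by linarith [hp.2]) (by linarith [hp.1]) (by positivity)
    apply div_nonneg (mul_nonneg (by linarith) hr0.le) (sq_nonneg p)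
  -- measurability of g
  have hmeas : Measurable g := by
    rw [hg]
    fun_prop
  -- main lintegral inequality
  have hmain : ENNReal.ofReal c * (∫⁻ p in Icc (0:ℝ) (r ^ β), (ENNReal.ofReal p)⁻¹ ∂Λ)
      ≤ ∫⁻ p in Icc (0:ℝ) 1, ENNReal.ofReal (g p) ∂Λ := by
    rw [← lintegral_const_mul' _ _ ENNReal.ofReal_ne_top]
    refine le_trans (lintegral_mono_ae ?_) (lintegral_mono_set (Icc_subset_Icc le_rfl hrβ1))
    have hae0 : ∀ᵐ p ∂Λ, p ≠ 0 := by
      rw [ae_iff]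
      simpa using h0
    filter_upwards [ae_restrict_mem measurableSet_Icc, ae_restrict_of_ae hae0] with p hp hp0
    exact hpoint p hp hp0
  -- finiteness
  have hfin : (∫⁻ p in Icc (0:ℝ) 1, ENNReal.ofReal (g p) ∂Λ) < ⊤ := by
    refine lt_of_le_of_lt (lintegral_mono_ae ?_) hdust
    filter_upwards [ae_restrict_mem measurableSet_Icc] with p hp
    exact hupper p hp
  -- the integral equals toReal of lintegral
  rw [hf]
  have heq : (∫ p in Icc (0:ℝ) 1, (1 - (1 - p) ^ Real.exp y) / Real.exp y / p ^ 2 ∂Λ)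
      = (∫⁻ p in Icc (0:ℝ) 1, ENNReal.ofReal (g p) ∂Λ).toReal := by
    rw [integral_eq_lintegral_of_nonneg_ae ?_ (hmeas.aestronglyMeasurable)]
    filter_upwards [ae_restrict_mem measurableSet_Icc] with p hp
    exact hnn p hp
  rw [heq]
  calc c * (∫⁻ p in Icc (0:ℝ) (r ^ β), (ENNReal.ofReal p)⁻¹ ∂Λ).toReal
      = (ENNReal.ofReal c * ∫⁻ p in Icc (0:ℝ) (r ^ β), (ENNReal.ofReal p)⁻¹ ∂Λ).toReal := by
        rw [ENNReal.toReal_mul, ENNReal.toReal_ofReal hc0]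
    _ ≤ (∫⁻ p in Icc (0:ℝ) 1, ENNReal.ofReal (g p) ∂Λ).toReal :=
        ENNReal.toReal_mono hfin.ne hmain
end

section
/- Let Λ be a finite measure on [0,1] with ∫_{[0,1]} p^{−1} Λ(dp) < ∞, let f(y) := ∫_{[0,1]} (1 − (1−p)^{e^y}) e^{−y} p^{−2} Λ(dp), and let 0 ≤ c < ∞. If √(log(1/r)) · ∫_{[0,r]} p^{−1} Λ(dp) → c as r → 0, then √y · f(y) → c as y → ∞. -/
open MeasureTheory Filter Set

open Topology
open scoped ENNReal

/-!
Write `t = e^y`, `g_t(p) = (1 - (1-p)^t) / (t p²)` (`rateKernel t p`) and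
`N(r) = ∫_{[0,r]} p⁻¹ Λ(dp)` (`dustIntegral Λ r`), so that `f(y) = ∫ g_t dΛ`. The elementary
bounds `p⁻¹ / (1 + tp) ≤ g_t(p) ≤ p⁻¹ min(1, 1/(tp))` give:

* `f(y) ≥ N(δ/t) / (1 + δ)`, since `tp ≤ δ` on `[0, δ/t]`;
* `f(y) ≤ ∫₀¹ N(min(1, 1/(ts))) ds`, by writing `min(1, 1/(tp))` as the length of
  `{s ∈ (0,1) : tps < 1}` and using Tonelli; splitting the `s`-integral at `e^{-y/2}` and `δ`
  bounds it by `N(1) e^{-y/2} + δ N(e^{-y/2}) + N(e^{-y}/δ)`.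

For a radius `r = κ e^{-by}` one has `log(1/r) ~ b y`, so the hypothesis turns these into
`√y f(y) ≥ c/(1+δ) - o(1)` and `√y f(y) ≤ c + √2 δ c + o(1)`; letting `δ → 0` gives the limit.
-/

noncomputable def rateKernel (t p : ℝ) : ℝ := (1 - (1 - p) ^ t) / t / p ^ 2

noncomputable def dustIntegral (Λ : Measure ℝ) (r : ℝ) : ℝ≥0∞ :=
  ∫⁻ p in Icc 0 r, (ENNReal.ofReal p)⁻¹ ∂Λ

lemma measurable_rateKernel (t : ℝ) : Measurable (rateKernel t) := by
  unfold rateKernel; fun_prop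

lemma rateKernel_nonneg {t p : ℝ} (ht : 0 ≤ t) (hp₀ : 0 ≤ p) (hp₁ : p ≤ 1) :
    0 ≤ rateKernel t p := by
  have := Real.rpow_le_one (sub_nonneg.2 hp₁) (by linarith) ht
  unfold rateKernel
  positivity

lemma rateKernel_le_inv_mul_min {t p : ℝ} (ht : 1 ≤ t) (hp₀ : 0 < p) (hp₁ : p ≤ 1) :
    rateKernel t p ≤ p⁻¹ * min 1 (t * p)⁻¹ := by
  have ht₀ : 0 < t := one_pos.trans_le ht
  have bernoulli : 1 - t * p ≤ (1 - p) ^ t := by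
    simpa [sub_eq_add_neg] using one_add_mul_self_le_rpow_one_add (by linarith : -1 ≤ -p) ht
  have hnonneg : 0 ≤ (1 - p) ^ t := Real.rpow_nonneg (by linarith) t
  rw [mul_min_of_nonneg _ _ (by positivity), rateKernel, div_div]
  refine le_min ?_ ?_
  · rw [div_le_iff₀ (by positivity)]; field_simp; linarith
  · rw [div_le_iff₀ (by positivity)]; field_simp; linarith

lemma inv_one_add_mul_inv_le_rateKernel {t p : ℝ} (ht : 0 < t) (hp₀ : 0 < p) (hp₁ : p ≤ 1) :
    (1 + t * p)⁻¹ * p⁻¹ ≤ rateKernel t p := by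
  have hpow : (1 - p) ^ t ≤ (1 + t * p)⁻¹ :=
    calc (1 - p) ^ t ≤ Real.exp (-p) ^ t :=
          Real.rpow_le_rpow (by linarith) (Real.one_sub_le_exp_neg p) ht.le
      _ = (Real.exp (t * p))⁻¹ := by rw [← Real.exp_mul, ← Real.exp_neg]; ring_nf
      _ ≤ (1 + t * p)⁻¹ :=
          inv_anti₀ (by positivity) (by linarith [Real.add_one_le_exp (t * p)])
  rw [rateKernel, div_div, le_div_iff₀ (by positivity)]
  have : (1 + t * p)⁻¹ * p⁻¹ * (t * p ^ 2) = 1 - (1 + t * p)⁻¹ := by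
    field_simp; ring
  linarith

lemma dustIntegral_mono (Λ : Measure ℝ) : Monotone (dustIntegral Λ) :=
  fun _ _ h => lintegral_mono_set (Icc_subset_Icc_right h)

lemma measure_singleton_zero_of_dustIntegral_ne_top {Λ : Measure ℝ} {r : ℝ} (hr : 0 ≤ r)
    (hN : dustIntegral Λ r ≠ ⊤) : Λ {0} = 0 := by
  by_contra hΛ
  have : ∫⁻ p in {0}, (ENNReal.ofReal p)⁻¹ ∂Λ ≤ dustIntegral Λ r :=
    lintegral_mono_set (singleton_subset_iff.2 ⟨le_rfl, hr⟩)
  simp only [Measure.restrict_singleton, lintegral_smul_measure, lintegral_dirac,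
    ENNReal.ofReal_zero, ENNReal.inv_zero, smul_eq_mul, ENNReal.mul_top hΛ, top_le_iff] at this
  exact hN this

lemma integral_rateKernel_eq_toReal (Λ : Measure ℝ) {t : ℝ} (ht : 0 ≤ t) :
    ∫ p in Icc 0 1, rateKernel t p ∂Λ =
      (∫⁻ p in Icc 0 1, ENNReal.ofReal (rateKernel t p) ∂Λ).toReal :=
  integral_eq_lintegral_of_nonneg_ae
    ((ae_restrict_iff' measurableSet_Icc).2
      (.of_forall fun _ hp => rateKernel_nonneg ht hp.1 hp.2))
    (measurable_rateKernel t).aestronglyMeasurable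

lemma lintegral_rateKernel_le_dustIntegral_one (Λ : Measure ℝ) {t : ℝ} (ht : 1 ≤ t) :
    ∫⁻ p in Icc 0 1, ENNReal.ofReal (rateKernel t p) ∂Λ ≤ dustIntegral Λ 1 := by
  refine setLIntegral_mono' measurableSet_Icc fun p ⟨hp₀, hp₁⟩ => ?_
  rcases hp₀.eq_or_lt with rfl | hp₀
  · simp
  rw [← ENNReal.ofReal_inv_of_pos hp₀]
  refine ENNReal.ofReal_le_ofReal ((rateKernel_le_inv_mul_min ht hp₀ hp₁).trans ?_)
  exact mul_le_of_le_one_right (inv_nonneg.2 hp₀.le) (min_le_left _ _)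

lemma ofReal_inv_one_add_mul_dustIntegral_le_lintegral {Λ : Measure ℝ} (hΛ : Λ {0} = 0)
    {t δ : ℝ} (ht : 0 < t) (hδ : 0 ≤ δ) (hδt : δ / t ≤ 1) :
    ENNReal.ofReal (1 + δ)⁻¹ * dustIntegral Λ (δ / t) ≤
      ∫⁻ p in Icc 0 1, ENNReal.ofReal (rateKernel t p) ∂Λ := by
  rw [dustIntegral, ← lintegral_const_mul' _ _ ENNReal.ofReal_ne_top]
  refine le_trans (lintegral_mono_ae ?_) (lintegral_mono_set (Icc_subset_Icc_right hδt))
  filter_upwards [ae_restrict_mem measurableSet_Icc,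
    ae_restrict_of_ae (compl_mem_ae_iff.2 hΛ)] with p ⟨hp_nonneg, hpr⟩ (hp : p ≠ 0)
  have hp₀ : 0 < p := hp_nonneg.lt_of_ne' hp
  have htp : t * p ≤ δ := by rwa [le_div_iff₀ ht, mul_comm] at hpr
  rw [← ENNReal.ofReal_inv_of_pos hp₀, ← ENNReal.ofReal_mul (by positivity)]
  refine ENNReal.ofReal_le_ofReal
    (le_trans ?_ (inv_one_add_mul_inv_le_rateKernel ht hp₀ (hpr.trans hδt)))
  gcongr

lemma ofReal_rateKernel_le_mul_volume {t p : ℝ} (ht : 1 ≤ t) (hp₀ : 0 ≤ p) (hp₁ : p ≤ 1) :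
    ENNReal.ofReal (rateKernel t p) ≤
      (ENNReal.ofReal p)⁻¹ * volume ({s | t * p * s < 1} ∩ Ioo 0 1) := by
  rcases hp₀.eq_or_lt with rfl | hp₀
  · simp [rateKernel]
  have hsub : Ioo 0 (min 1 (t * p)⁻¹) ⊆ {s | t * p * s < 1} ∩ Ioo 0 1 := by
    rintro s ⟨hs₀, hs⟩
    rw [lt_min_iff, ← one_div, lt_div_iff₀ (by positivity), mul_comm] at hs
    exact ⟨hs.2, hs₀, hs.1⟩
  calc ENNReal.ofReal (rateKernel t p)
      ≤ (ENNReal.ofReal p)⁻¹ * ENNReal.ofReal (min 1 (t * p)⁻¹) := by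
        rw [← ENNReal.ofReal_inv_of_pos hp₀, ← ENNReal.ofReal_mul (by positivity)]
        exact ENNReal.ofReal_le_ofReal (rateKernel_le_inv_mul_min ht hp₀ hp₁)
    _ ≤ _ := by
        gcongr
        simpa using measure_mono (μ := volume) hsub

lemma lintegral_rateKernel_le_setLIntegral_dustIntegral (Λ : Measure ℝ) [SFinite Λ] {t : ℝ}
    (ht : 1 ≤ t) :
    ∫⁻ p in Icc 0 1, ENNReal.ofReal (rateKernel t p) ∂Λ ≤
      ∫⁻ s in Ioo 0 1, dustIntegral Λ (min 1 (t * s)⁻¹) := by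
  have ht₀ : 0 < t := one_pos.trans_le ht
  have hS : MeasurableSet {q : ℝ × ℝ | t * q.1 * q.2 < 1} :=
    measurableSet_lt (by fun_prop) measurable_const
  set F : ℝ → ℝ → ℝ≥0∞ := fun p s =>
    {q : ℝ × ℝ | t * q.1 * q.2 < 1}.indicator (fun q => (ENNReal.ofReal q.1)⁻¹) (p, s)
  have hp_side : ∀ p ∈ Icc (0 : ℝ) 1,
      ENNReal.ofReal (rateKernel t p) ≤ ∫⁻ s in Ioo 0 1, F p s := by
    rintro p ⟨hp₀, hp₁⟩
    have hSp : MeasurableSet {s : ℝ | t * p * s < 1} :=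
      measurableSet_lt (by fun_prop) measurable_const
    refine (ofReal_rateKernel_le_mul_volume ht hp₀ hp₁).trans_eq ?_
    rw [← Measure.restrict_apply hSp, ← lintegral_indicator_const hSp]
    rfl
  have hs_side : ∀ s ∈ Ioo (0 : ℝ) 1,
      ∫⁻ p in Icc 0 1, F p s ∂Λ ≤ dustIntegral Λ (min 1 (t * s)⁻¹) := by
    rintro s ⟨hs₀, -⟩
    have hSs : MeasurableSet {p : ℝ | t * p * s < 1} :=
      measurableSet_lt (by fun_prop) measurable_const
    change ∫⁻ p in Icc 0 1,
      {p : ℝ | t * p * s < 1}.indicator (fun p => (ENNReal.ofReal p)⁻¹) p ∂Λ ≤ _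
    rw [lintegral_indicator hSs, Measure.restrict_restrict hSs]
    refine lintegral_mono_set fun p ⟨hp, hp₀, hp₁⟩ => ⟨hp₀, le_min hp₁ ?_⟩
    rw [← one_div, le_div_iff₀ (by positivity)]
    linarith [show t * p * s < 1 from hp]
  calc ∫⁻ p in Icc 0 1, ENNReal.ofReal (rateKernel t p) ∂Λ
      ≤ ∫⁻ p in Icc 0 1, (∫⁻ s in Ioo 0 1, F p s) ∂Λ :=
        setLIntegral_mono' measurableSet_Icc hp_side
    _ = ∫⁻ s in Ioo 0 1, ∫⁻ p in Icc 0 1, F p s ∂Λ :=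
        lintegral_lintegral_swap (f := F)
          (Measurable.aemeasurable (measurable_fst.ennreal_ofReal.inv.indicator hS))
    _ ≤ _ := setLIntegral_mono' measurableSet_Ioo hs_side

lemma setLIntegral_dustIntegral_le (Λ : Measure ℝ) {t α δ : ℝ} (ht : 0 < t) (hα : 0 < α)
    (hαδ : α ≤ δ) :
    ∫⁻ s in Ioo 0 1, dustIntegral Λ (min 1 (t * s)⁻¹) ≤
      dustIntegral Λ 1 * ENNReal.ofReal α + dustIntegral Λ (t * α)⁻¹ * ENNReal.ofReal δ +
        dustIntegral Λ (t * δ)⁻¹ := by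
  have piece : ∀ {I : Set ℝ} {r : ℝ}, MeasurableSet I → (∀ s ∈ I, min 1 (t * s)⁻¹ ≤ r) →
      ∫⁻ s in I, dustIntegral Λ (min 1 (t * s)⁻¹) ≤ dustIntegral Λ r * volume I :=
    fun hI hr => (setLIntegral_mono' hI fun s hs => dustIntegral_mono Λ (hr s hs)).trans
      (setLIntegral_const _ _).le
  have hinv : ∀ {a s : ℝ}, 0 < a → a ≤ s → min 1 (t * s)⁻¹ ≤ (t * a)⁻¹ := fun ha has =>
    (min_le_right _ _).trans (inv_anti₀ (by positivity) (by gcongr))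
  have hcover : Ioo 0 1 ⊆ Ioo 0 α ∪ Ico α δ ∪ Ico δ 1 := fun s ⟨hs₀, hs₁⟩ => by
    rcases lt_or_ge s α with h | h
    · exact .inl (.inl ⟨hs₀, h⟩)
    rcases lt_or_ge s δ with h' | h'
    · exact .inl (.inr ⟨h, h'⟩)
    · exact .inr ⟨h', hs₁⟩
  refine (lintegral_mono_set hcover).trans <| (lintegral_union_le _ _ _).trans <|
    add_le_add ((lintegral_union_le _ _ _).trans (add_le_add ?_ ?_)) ?_
  · simpa using piece (measurableSet_Ioo (a := 0) (b := α)) fun s _ => min_le_left _ _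
  · refine (piece measurableSet_Ico fun s hs => hinv hα hs.1).trans ?_
    rw [Real.volume_Ico]
    gcongr
    linarith
  · refine (piece measurableSet_Ico fun s hs => hinv (hα.trans_le hαδ) hs.1).trans ?_
    rw [Real.volume_Ico]
    exact mul_le_of_le_one_right' (ENNReal.ofReal_le_one.2 (by linarith))

lemma le_sqrt_mul_integral_rateKernel {Λ : Measure ℝ} (hΛ : Λ {0} = 0)
    (h₁ : dustIntegral Λ 1 ≠ ⊤) {y δ : ℝ} (hy : 0 ≤ y) (hδ₀ : 0 < δ) (hδ₁ : δ ≤ 1) :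
    (1 + δ)⁻¹ * (√y * (dustIntegral Λ (δ * Real.exp (-y))).toReal) ≤
      √y * ∫ p in Icc 0 1, rateKernel (Real.exp y) p ∂Λ := by
  have ht : 1 ≤ Real.exp y := Real.one_le_exp hy
  have hL := ofReal_inv_one_add_mul_dustIntegral_le_lintegral hΛ (Real.exp_pos y) hδ₀.le
    (div_le_one_of_le₀ (hδ₁.trans ht) (Real.exp_pos y).le)
  rw [mul_left_comm, integral_rateKernel_eq_toReal Λ (Real.exp_pos y).le]
  gcongr
  rw [← ENNReal.toReal_ofReal (by positivity : 0 ≤ (1 + δ)⁻¹), ← ENNReal.toReal_mul,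
    Real.exp_neg, ← div_eq_mul_inv]
  exact ENNReal.toReal_mono
    ((lintegral_rateKernel_le_dustIntegral_one Λ ht).trans_lt h₁.lt_top).ne hL

lemma sqrt_mul_integral_rateKernel_le {Λ : Measure ℝ} [SFinite Λ] (h₁ : dustIntegral Λ 1 ≠ ⊤)
    {y δ : ℝ} (hy : 0 ≤ y) (hyδ : Real.exp (-(y / 2)) ≤ δ) :
    √y * ∫ p in Icc 0 1, rateKernel (Real.exp y) p ∂Λ ≤
      √y * (dustIntegral Λ (Real.exp (-y) / δ)).toReal +
        δ * (√y * (dustIntegral Λ (Real.exp (-(y / 2)))).toReal) +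
          (dustIntegral Λ 1).toReal * (√y * Real.exp (-(y / 2))) := by
  have hδ : 0 < δ := (Real.exp_pos _).trans_le hyδ
  have hN : ∀ {r}, r ≤ 1 → dustIntegral Λ r ≠ ⊤ := fun hr =>
    ne_top_of_le_ne_top h₁ (dustIntegral_mono Λ hr)
  have hα₁ : Real.exp (-(y / 2)) ≤ 1 := Real.exp_le_one_iff.2 (by linarith)
  have hδ₁ : Real.exp (-y) / δ ≤ 1 :=
    (div_le_one hδ).2 ((Real.exp_le_exp.2 (by linarith)).trans hyδ)
  have hL := (lintegral_rateKernel_le_setLIntegral_dustIntegral Λ (Real.one_le_exp hy)).trans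
    (setLIntegral_dustIntegral_le Λ (Real.exp_pos y) (Real.exp_pos _) hyδ)
  have htα : (Real.exp y * Real.exp (-(y / 2)))⁻¹ = Real.exp (-(y / 2)) := by
    rw [← Real.exp_add, ← Real.exp_neg]; congr 1; ring
  have htδ : (Real.exp y * δ)⁻¹ = Real.exp (-y) / δ := by
    rw [mul_inv, Real.exp_neg, div_eq_mul_inv]
  rw [htα, htδ, ← ENNReal.ofReal_toReal h₁, ← ENNReal.ofReal_toReal (hN hα₁),
    ← ENNReal.ofReal_toReal (hN hδ₁), ← ENNReal.ofReal_mul ENNReal.toReal_nonneg,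
    ← ENNReal.ofReal_mul ENNReal.toReal_nonneg,
    ← ENNReal.ofReal_add (by positivity) (by positivity),
    ← ENNReal.ofReal_add (by positivity) ENNReal.toReal_nonneg] at hL
  rw [integral_rateKernel_eq_toReal Λ (Real.exp_pos y).le]
  exact (mul_le_mul_of_nonneg_left (ENNReal.toReal_le_of_le_ofReal (by positivity) hL)
    (Real.sqrt_nonneg y)).trans_eq (by ring)

lemma tendsto_sqrt_mul_comp_mul_exp_neg {φ : ℝ → ℝ} {c κ b : ℝ}
    (hφ : Tendsto (fun r => √(Real.log (1 / r)) * φ r) (𝓝[>] 0) (𝓝 c)) (hκ : 0 < κ)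
    (hb : 0 < b) :
    Tendsto (fun y => √y * φ (κ * Real.exp (-(b * y)))) atTop (𝓝 (c / √b)) := by
  have hr : Tendsto (fun y => κ * Real.exp (-(b * y))) atTop (𝓝[>] 0) := by
    refine tendsto_nhdsWithin_iff.2 ⟨?_, .of_forall fun y => mem_Ioi.2 (by positivity)⟩
    simpa using (Real.tendsto_exp_neg_atTop_nhds_zero.comp
      (tendsto_id.const_mul_atTop hb)).const_mul κ
  have hlog : ∀ y, Real.log (1 / (κ * Real.exp (-(b * y)))) = b * y - Real.log κ := fun y => by
    rw [one_div, Real.log_inv, Real.log_mul hκ.ne' (Real.exp_pos _).ne', Real.log_exp]; ring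
  have hratio : Tendsto (fun y => √(Real.log (1 / (κ * Real.exp (-(b * y)))) / y)) atTop
      (𝓝 √b) := by
    refine Tendsto.sqrt ?_
    have : Tendsto (fun y => b - Real.log κ / y) atTop (𝓝 b) := by
      simpa using (tendsto_const_nhds (x := b)).sub
        ((tendsto_const_nhds (x := Real.log κ)).div_atTop tendsto_id)
    refine this.congr' ?_
    filter_upwards [eventually_gt_atTop 0] with y hy
    rw [hlog]; field_simp
  refine ((hφ.comp hr).div hratio (Real.sqrt_ne_zero'.2 hb)).congr' ?_
  filter_upwards [eventually_gt_atTop 0, eventually_gt_atTop (Real.log κ / b)] with y hy hyκ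
  have hA : 0 < b * y - Real.log κ := by rw [div_lt_iff₀ hb] at hyκ; linarith
  simp only [Pi.div_apply, Function.comp_apply, hlog]
  rw [Real.sqrt_div' _ hy.le]
  field_simp [(Real.sqrt_pos.2 hA).ne']

lemma tendsto_sqrt_mul_exp_neg_half :
    Tendsto (fun y => √y * Real.exp (-(y / 2))) atTop (𝓝 0) := by
  refine (tendsto_rpow_mul_exp_neg_mul_atTop_nhds_zero (1 / 2) (1 / 2) one_half_pos).congr' ?_
  filter_upwards [eventually_ge_atTop 0] with y hy
  rw [Real.sqrt_eq_rpow]; ring_nf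

lemma tendsto_sqrt_mul_split_bound {φ : ℝ → ℝ} {c δ : ℝ}
    (hφ : Tendsto (fun r => √(Real.log (1 / r)) * φ r) (𝓝[>] 0) (𝓝 c)) (hδ : 0 < δ) (K : ℝ) :
    Tendsto (fun y => √y * φ (Real.exp (-y) / δ) + δ * (√y * φ (Real.exp (-(y / 2)))) +
      K * (√y * Real.exp (-(y / 2)))) atTop (𝓝 (c + δ * (c * √2))) := by
  have h₁ := tendsto_sqrt_mul_comp_mul_exp_neg hφ (inv_pos.2 hδ) one_pos
  have h₂ := tendsto_sqrt_mul_comp_mul_exp_neg hφ one_pos one_half_pos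
  simpa [inv_mul_eq_div] using
    (h₁.add (h₂.const_mul δ)).add (tendsto_sqrt_mul_exp_neg_half.const_mul K)

lemma tendsto_of_tendsto_bounds {α ι β : Type*} [TopologicalSpace β] [LinearOrder β]
    [OrderTopology β] {l : Filter α} {L : Filter ι} [L.NeBot] {g : α → β} {m M : ι → β} {c : β}
    (hm : Tendsto m L (𝓝 c)) (hM : Tendsto M L (𝓝 c))
    (hlo : ∀ᶠ i in L, ∃ lo : α → β, Tendsto lo l (𝓝 (m i)) ∧ ∀ᶠ x in l, lo x ≤ g x)
    (hup : ∀ᶠ i in L, ∃ up : α → β, Tendsto up l (𝓝 (M i)) ∧ ∀ᶠ x in l, g x ≤ up x) :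
    Tendsto g l (𝓝 c) := by
  refine tendsto_order.2 ⟨fun a ha => ?_, fun a ha => ?_⟩
  · obtain ⟨i, ⟨lo, hi, hig⟩, hai⟩ := (hlo.and (hm.eventually_const_lt ha)).exists
    filter_upwards [hi.eventually_const_lt hai, hig] with x h₁ h₂ using h₁.trans_le h₂
  · obtain ⟨i, ⟨up, hi, hig⟩, hai⟩ := (hup.and (hM.eventually_lt_const ha)).exists
    filter_upwards [hi.eventually_lt_const hai, hig] with x h₁ h₂ using h₂.trans_lt h₁

theorem f_asymptotics_of_dust_asymptotics_general
    (Λ : Measure ℝ) [IsFiniteMeasure Λ]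
    (hdust : (∫⁻ p in Icc (0 : ℝ) 1, (ENNReal.ofReal p)⁻¹ ∂Λ) < ⊤)
    (f : ℝ → ℝ)
    (hf : ∀ y : ℝ,
      f y = ∫ p in Icc (0 : ℝ) 1, (1 - (1 - p) ^ Real.exp y) / Real.exp y / p ^ 2 ∂Λ)
    (c : ℝ)
    (h : Tendsto
      (fun r : ℝ =>
        Real.sqrt (Real.log (1 / r)) *
          (∫⁻ p in Icc (0 : ℝ) r, (ENNReal.ofReal p)⁻¹ ∂Λ).toReal)
      (nhdsWithin 0 (Ioi 0)) (nhds c)) :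
    Tendsto (fun y : ℝ => Real.sqrt y * f y) atTop (nhds c) := by
  have hN : Tendsto (fun r => √(Real.log (1 / r)) * (dustIntegral Λ r).toReal) (𝓝[>] 0) (𝓝 c) :=
    h
  have h₁ : dustIntegral Λ 1 ≠ ⊤ := hdust.ne
  have hΛ : Λ {0} = 0 := measure_singleton_zero_of_dustIntegral_ne_top zero_le_one h₁
  have hf' : ∀ y, f y = ∫ p in Icc 0 1, rateKernel (Real.exp y) p ∂Λ := hf
  refine tendsto_of_tendsto_bounds (L := 𝓝[>] 0) (m := fun δ => (1 + δ)⁻¹ * c)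
    (M := fun δ => c + δ * (c * √2)) ?_ ?_ ?_ ?_
  · simpa using ((tendsto_id (x := 𝓝 (0 : ℝ))).const_add 1 |>.inv₀ (by norm_num)
      |>.mul_const c).mono_left nhdsWithin_le_nhds
  · simpa using ((tendsto_id (x := 𝓝 (0 : ℝ))).mul_const (c * √2) |>.const_add c).mono_left
      nhdsWithin_le_nhds
  · filter_upwards [Ioc_mem_nhdsGT one_pos] with δ ⟨hδ₀, hδ₁⟩
    refine ⟨_, by simpa using
      (tendsto_sqrt_mul_comp_mul_exp_neg hN hδ₀ one_pos).const_mul (1 + δ)⁻¹, ?_⟩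
    filter_upwards [eventually_ge_atTop 0] with y hy
    rw [hf']
    exact le_sqrt_mul_integral_rateKernel hΛ h₁ hy hδ₀ hδ₁
  · filter_upwards [self_mem_nhdsWithin] with δ (hδ : 0 < δ)
    refine ⟨_, tendsto_sqrt_mul_split_bound hN hδ (dustIntegral Λ 1).toReal, ?_⟩
    filter_upwards [eventually_ge_atTop 0, (Real.tendsto_exp_neg_atTop_nhds_zero.comp
      (tendsto_id.atTop_div_const two_pos)).eventually_le_const hδ] with y hy hyδ
    rw [hf']
    exact sqrt_mul_integral_rateKernel_le h₁ hy hyδ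

/-- Let `Λ` be a finite measure on `[0,1]` with `∫_{[0,1]} p⁻¹ Λ(dp) < ∞`, let
`f y := ∫_{[0,1]} (1 - (1-p)^(e^y)) e^{-y} p⁻² Λ(dp)`, and let `0 ≤ c < ∞`.  If
`√(log(1/r)) ∫_{[0,r]} p⁻¹ Λ(dp) → c` as `r → 0` (from the right), then
`√y · f y → c` as `y → ∞`. -/
theorem f_asymptotics_of_dust_asymptotics
    (Λ : Measure ℝ) [IsFiniteMeasure Λ] (hsupp : Λ (Icc (0 : ℝ) 1)ᶜ = 0)
    (hdust : (∫⁻ p in Icc (0 : ℝ) 1, (ENNReal.ofReal p)⁻¹ ∂Λ) < ⊤)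
    (f : ℝ → ℝ)
    (hf : ∀ y : ℝ,
      f y = ∫ p in Icc (0 : ℝ) 1, (1 - (1 - p) ^ Real.exp y) / Real.exp y / p ^ 2 ∂Λ)
    (c : ℝ) (hc : 0 ≤ c)
    (h : Tendsto
      (fun r : ℝ =>
        Real.sqrt (Real.log (1 / r)) *
          (∫⁻ p in Icc (0 : ℝ) r, (ENNReal.ofReal p)⁻¹ ∂Λ).toReal)
      (nhdsWithin 0 (Ioi 0)) (nhds c)) :
    Tendsto (fun y : ℝ => Real.sqrt y * f y) atTop (nhds c) :=
  f_asymptotics_of_dust_asymptotics_general Λ hdust f hf c h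
end

section
/- Let f : [0,∞) → [0,∞) be nonincreasing and let c ≥ 0. If ∫_0^z f(y) dy = (2c + o(1)) √z as z → ∞, then √z · f(z) → c as z → ∞. -/
open MeasureTheory Filter Set

/-- Let `f : [0,∞) → [0,∞)` be nonincreasing and let `c ≥ 0`.  If
`∫_0^z f(y) dy = (2c + o(1))√z` as `z → ∞`, then `√z · f z → c` as `z → ∞`. -/
theorem sqrt_mul_tendsto_of_integral
    (f : ℝ → ℝ) (hfanti : AntitoneOn f (Ici (0 : ℝ))) (hfnonneg : ∀ y ≥ (0 : ℝ), 0 ≤ f y)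
    (c : ℝ) (hc : 0 ≤ c)
    (h : Tendsto (fun z : ℝ => (∫ y in (0 : ℝ)..z, f y) / Real.sqrt z) atTop
      (nhds (2 * c))) :
    Tendsto (fun z : ℝ => Real.sqrt z * f z) atTop (nhds c) := by
  have hInt : ∀ x y : ℝ, 0 ≤ x → 0 ≤ y → IntervalIntegrable f volume x y := by
    intro x y hx hy
    exact (hfanti.mono fun t ht => le_trans (le_inf hx hy) ht.1).intervalIntegrable
  have est1 : ∀ a z : ℝ, 0 ≤ a → a ≤ 1 → 0 ≤ z →
      (1 - a) * z * f z ≤ (∫ y in (0:ℝ)..z, f y) - ∫ y in (0:ℝ)..(a*z), f y := by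
    intro a z ha ha1 hz
    have hazpos : 0 ≤ a * z := mul_nonneg ha hz
    have haz : a * z ≤ z := by nlinarith
    rw [intervalIntegral.integral_interval_sub_left (hInt 0 z le_rfl hz)
      (hInt 0 (a*z) le_rfl hazpos)]
    calc (1 - a) * z * f z = ∫ _ in (a*z)..z, f z := by
          rw [intervalIntegral.integral_const, smul_eq_mul]; ring
      _ ≤ ∫ y in (a*z)..z, f y := by
          apply intervalIntegral.integral_mono_on haz intervalIntegrable_const
            (hInt _ _ hazpos hz)
          intro y hy
          exact hfanti (le_trans hazpos hy.1) hz hy.2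
  have est2 : ∀ t z : ℝ, 1 ≤ t → 0 ≤ z →
      (∫ y in (0:ℝ)..(t*z), f y) - (∫ y in (0:ℝ)..z, f y) ≤ (t - 1) * z * f z := by
    intro t z ht hz
    have htzpos : 0 ≤ t * z := mul_nonneg (by linarith) hz
    have htz : z ≤ t * z := by nlinarith
    rw [intervalIntegral.integral_interval_sub_left (hInt 0 (t*z) le_rfl htzpos)
      (hInt 0 z le_rfl hz)]
    calc (∫ y in z..(t*z), f y) ≤ ∫ _ in z..(t*z), f z := by
          apply intervalIntegral.integral_mono_on htz (hInt _ _ hz htzpos)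
            intervalIntegrable_const
          intro y hy
          exact hfanti hz (le_trans hz hy.1) hy.1
      _ = (t - 1) * z * f z := by
          rw [intervalIntegral.integral_const, smul_eq_mul]; ring
  rw [tendsto_order]
  constructor
  · -- lower bound
    intro l hl
    rcases eq_or_lt_of_le hc with hc0 | hc0
    · filter_upwards [eventually_ge_atTop (0:ℝ)] with z hz
      have h1 := mul_nonneg (Real.sqrt_nonneg z) (hfnonneg z hz)
      have : c = 0 := hc0.symm
      linarith
    · set l' := max l (c/2) with hl'
      have hl'pos : 0 < l' := lt_of_lt_of_le (by linarith) (le_max_right _ _)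
      have hl'c : l' < c := max_lt hl (by linarith)
      have hll' : l ≤ l' := le_max_left _ _
      set t := c / l' with ht
      have ht1 : 1 < t := (one_lt_div hl'pos).2 hl'c
      have ht0 : 0 < t := by linarith
      have hcomp : Tendsto (fun z : ℝ => (∫ y in (0:ℝ)..(t^2*z), f y) / Real.sqrt (t^2*z))
          atTop (nhds (2*c)) := h.comp (tendsto_id.const_mul_atTop (by positivity))
      have hlim : Tendsto (fun z : ℝ =>
          (t * ((∫ y in (0:ℝ)..(t^2*z), f y) / Real.sqrt (t^2*z))
            - (∫ y in (0:ℝ)..z, f y) / Real.sqrt z) / (t^2-1)) atTop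
          (nhds ((t * (2*c) - 2*c)/(t^2-1))) := ((hcomp.const_mul t).sub h).div_const _
      have hval : l < (t * (2*c) - 2*c)/(t^2-1) := by
        have h2 : (t * (2*c) - 2*c)/(t^2-1) = 2*c/(t+1) := by
          rw [show t^2 - 1 = (t-1)*(t+1) by ring, show t*(2*c) - 2*c = (t-1)*(2*c) by ring,
            mul_div_mul_left _ _ (by linarith : t - 1 ≠ 0)]
        rw [h2, lt_div_iff₀ (by linarith : (0:ℝ) < t+1)]
        have hlt : l' * t = c := by
          rw [ht]; field_simp
        nlinarith
      filter_upwards [hlim.eventually_const_lt hval, eventually_gt_atTop (0:ℝ)] with z h1 hz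
      refine lt_of_lt_of_le h1 ?_
      have hsq : Real.sqrt (t^2*z) = t * Real.sqrt z := by
        rw [Real.sqrt_mul (by positivity), Real.sqrt_sq ht0.le]
      have hzz : Real.sqrt z * Real.sqrt z = z := Real.mul_self_sqrt hz.le
      have hsqz : 0 < Real.sqrt z := Real.sqrt_pos.2 hz
      have h2 := est2 (t^2) z (by nlinarith) hz.le
      rw [hsq, div_le_iff₀ (by nlinarith : (0:ℝ) < t^2 - 1)]
      have e1 : t * ((∫ y in (0:ℝ)..(t^2*z), f y) / (t * Real.sqrt z))
          = (∫ y in (0:ℝ)..(t^2*z), f y) / Real.sqrt z := by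
        rw [mul_div_assoc']; rw [mul_div_mul_left _ _ (ne_of_gt ht0)]
      rw [e1, div_sub_div_same, div_le_iff₀ hsqz]
      have e2 : Real.sqrt z * f z * (t^2-1) * Real.sqrt z = (t^2-1) * z * f z := by
        linear_combination ((t^2-1) * f z) * hzz
      linarith
  · -- upper bound
    intro u hu
    have hu0 : 0 < u := lt_of_le_of_lt hc hu
    have hcu : 0 < c + u := by linarith
    set s := max (2*c/(c+u)) (1/2) with hs
    have hs0 : 0 < s := lt_of_lt_of_le (by norm_num) (le_max_right _ _)
    have hs1 : s < 1 := max_lt ((div_lt_one hcu).2 (by linarith)) (by norm_num)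
    have hcomp : Tendsto (fun z : ℝ => (∫ y in (0:ℝ)..(s^2*z), f y) / Real.sqrt (s^2*z))
        atTop (nhds (2*c)) := h.comp (tendsto_id.const_mul_atTop (by positivity))
    have hlim : Tendsto (fun z : ℝ =>
        ((∫ y in (0:ℝ)..z, f y) / Real.sqrt z
          - s * ((∫ y in (0:ℝ)..(s^2*z), f y) / Real.sqrt (s^2*z))) / (1-s^2)) atTop
        (nhds ((2*c - s * (2*c))/(1-s^2))) := (h.sub (hcomp.const_mul s)).div_const _
    have hval : (2*c - s * (2*c))/(1-s^2) < u := by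
      have h2 : (2*c - s*(2*c))/(1-s^2) = 2*c/(1+s) := by
        rw [show 1 - s^2 = (1-s)*(1+s) by ring, show 2*c - s*(2*c) = (1-s)*(2*c) by ring,
          mul_div_mul_left _ _ (by linarith : 1 - s ≠ 0)]
      rw [h2, div_lt_iff₀ (by linarith : (0:ℝ) < 1+s)]
      have hs2 : 2*c ≤ s * (c+u) := (div_le_iff₀ hcu).1 (le_max_left _ _)
      have hsc : s * c ≤ c := by nlinarith
      nlinarith
    filter_upwards [hlim.eventually_lt_const hval, eventually_gt_atTop (0:ℝ)] with z h1 hz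
    refine lt_of_le_of_lt ?_ h1
    have hsq : Real.sqrt (s^2*z) = s * Real.sqrt z := by
      rw [Real.sqrt_mul (by positivity), Real.sqrt_sq hs0.le]
    have hzz : Real.sqrt z * Real.sqrt z = z := Real.mul_self_sqrt hz.le
    have hsqz : 0 < Real.sqrt z := Real.sqrt_pos.2 hz
    have h2 := est1 (s^2) z (by positivity) (by nlinarith) hz.le
    rw [hsq, le_div_iff₀ (by nlinarith : (0:ℝ) < 1 - s^2)]
    have e1 : s * ((∫ y in (0:ℝ)..(s^2*z), f y) / (s * Real.sqrt z))
        = (∫ y in (0:ℝ)..(s^2*z), f y) / Real.sqrt z := by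
      rw [mul_div_assoc']; rw [mul_div_mul_left _ _ (ne_of_gt hs0)]
    rw [e1, div_sub_div_same, le_div_iff₀ hsqz]
    have e2 : Real.sqrt z * f z * (1-s^2) * Real.sqrt z = (1-s^2) * z * f z := by
      linear_combination ((1-s^2) * f z) * hzz
    linarith
end

section
/- Let μ > 0, let f : ℝ → ℝ be a positive, nonincreasing, continuous function, let z > 0, let S : [0,∞) → [0,∞) be a right-continuous nondecreasing function with S(0) = 0, let Y : [0,∞) → ℝ be a right-continuous solution of Y_t = z − S_t + ∫_0^t f(Y_s) ds, and let ρ : [0,∞) → ℝ be a continuous solution of ρ_t = z − μt + ∫_0^t f(ρ_s) ds. Then for every t ≥ 0, |Y_t − ρ_t| ≤ 2 M_t, where M_t := sup_{0 ≤ u ≤ t} |S_u − μu|. -/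
open MeasureTheory Filter Set

private lemma barrier (h : ℝ → ℝ) (T : ℝ) (hT : 0 ≤ T)
    (hint : IntervalIntegrable h volume 0 T)
    (M : ℝ) (hM : 0 ≤ M)
    (hsign : ∀ s ∈ Icc (0:ℝ) T, M < ∫ x in (0:ℝ)..s, h x → h s ≤ 0) :
    ∀ s ∈ Icc (0:ℝ) T, (∫ x in (0:ℝ)..s, h x) ≤ M := by
  set φ : ℝ → ℝ := fun s => ∫ x in (0:ℝ)..s, h x with hφ
  have hIcc : IntegrableOn h (uIcc 0 T) volume := by
    rw [uIcc_of_le hT]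
    exact (intervalIntegrable_iff_integrableOn_Icc_of_le hT).1 hint
  have hcont : ContinuousOn φ (Icc 0 T) := by
    have := intervalIntegral.continuousOn_primitive_interval (a := (0:ℝ)) (b := T)
      (μ := volume) hIcc
    rwa [uIcc_of_le hT] at this
  intro t₀ ht₀
  by_contra hcon
  push_neg at hcon
  set A : Set ℝ := Icc 0 t₀ ∩ φ ⁻¹' (Iic M) with hA
  have hsub : Icc (0:ℝ) t₀ ⊆ Icc 0 T := Icc_subset_Icc le_rfl ht₀.2
  have hAclosed : IsClosed A :=
    (hcont.mono hsub).preimage_isClosed_of_isClosed isClosed_Icc isClosed_Iic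
  have h0A : (0:ℝ) ∈ A := by
    constructor
    · exact ⟨le_rfl, ht₀.1⟩
    · simp [hφ, intervalIntegral.integral_same, hM]
  have hAne : A.Nonempty := ⟨0, h0A⟩
  have hAbdd : BddAbove A := ⟨t₀, fun x hx => hx.1.2⟩
  set τ := sSup A with hτ
  have hτA : τ ∈ A := hAclosed.csSup_mem hAne hAbdd
  have hτle : τ ≤ t₀ := hτA.1.2
  have hτ0 : 0 ≤ τ := hτA.1.1
  have hτne : τ ≠ t₀ := by
    intro he
    exact absurd hτA.2 (by simpa [he, Set.mem_Iic] using not_le.2 hcon)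
  have hτlt : τ < t₀ := lt_of_le_of_ne hτle hτne
  -- on Ioc τ t₀, φ > M hence h ≤ 0
  have hneg : ∀ s ∈ Ioc τ t₀, h s ≤ 0 := by
    intro s hs
    have hsA : s ∉ A := fun hmem => absurd (le_csSup hAbdd hmem) (not_le.2 hs.1)
    have hsIcc : s ∈ Icc (0:ℝ) t₀ := ⟨hτ0.trans hs.1.le, hs.2⟩
    have : M < φ s := by
      by_contra hle
      exact hsA ⟨hsIcc, not_lt.1 hle⟩
    exact hsign s (hsub hsIcc) this
  have hi1 : IntervalIntegrable h volume 0 τ :=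
    hint.mono_set (by rw [uIcc_of_le hτ0, uIcc_of_le hT]; exact Icc_subset_Icc le_rfl (hτle.trans ht₀.2))
  have hi2 : IntervalIntegrable h volume τ t₀ :=
    hint.mono_set (by rw [uIcc_of_le hτlt.le, uIcc_of_le hT]; exact Icc_subset_Icc hτ0 ht₀.2)
  have hsplit : φ τ + ∫ x in τ..t₀, h x = φ t₀ :=
    intervalIntegral.integral_add_adjacent_intervals hi1 hi2
  have hI : (∫ x in τ..t₀, h x) ≤ 0 := by
    rw [intervalIntegral.integral_of_le hτlt.le]
    exact setIntegral_nonpos measurableSet_Ioc hneg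
  have hτM : φ τ ≤ M := hτA.2
  have : φ t₀ ≤ M := by linarith
  exact absurd this (not_le.2 hcon)

/-- Deterministic pathwise comparison: let `μ > 0`, let `f` be positive, nonincreasing,
continuous, let `z > 0`, let `S : [0,∞) → [0,∞)` be right-continuous nondecreasing with
`S 0 = 0`, let `Y` be a right-continuous solution of
`Y t = z - S t + ∫_0^t f (Y s) ds` and `ρ` a continuous solution of
`ρ t = z - μ t + ∫_0^t f (ρ s) ds`.  Then for every `t ≥ 0`,
`|Y t - ρ t| ≤ 2 M_t`, where `M_t := sup_{0 ≤ u ≤ t} |S u - μ u|`. -/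
theorem pathwise_comparison
    (μ : ℝ) (hμ : 0 < μ)
    (f : ℝ → ℝ) (hfpos : ∀ y, 0 < f y) (hfanti : Antitone f) (hfcont : Continuous f)
    (z : ℝ) (hz : 0 < z)
    (S : ℝ → ℝ) (hS0 : S 0 = 0) (hSnonneg : ∀ t ≥ (0 : ℝ), 0 ≤ S t)
    (hSmono : MonotoneOn S (Ici (0 : ℝ)))
    (hSrc : ∀ t ≥ (0 : ℝ), ContinuousWithinAt S (Ici t) t)
    (Y : ℝ → ℝ)
    (hYrc : ∀ t ≥ (0 : ℝ), ContinuousWithinAt Y (Ici t) t)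
    (hYint : ∀ t ≥ (0 : ℝ), IntervalIntegrable (fun s => f (Y s)) volume 0 t)
    (hY : ∀ t ≥ (0 : ℝ), Y t = z - S t + ∫ s in (0 : ℝ)..t, f (Y s))
    (ρ : ℝ → ℝ) (hρcont : ContinuousOn ρ (Ici (0 : ℝ)))
    (hρ : ∀ t ≥ (0 : ℝ), ρ t = z - μ * t + ∫ s in (0 : ℝ)..t, f (ρ s))
    (t : ℝ) (ht : 0 ≤ t) :
    |Y t - ρ t| ≤ 2 * sSup ((fun u => |S u - μ * u|) '' Icc 0 t) := by
  set M := sSup ((fun u => |S u - μ * u|) '' Icc 0 t) with hM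
  have hbdd : BddAbove ((fun u => |S u - μ * u|) '' Icc 0 t) := by
    refine ⟨S t + μ * t, ?_⟩
    rintro x ⟨u, hu, rfl⟩
    have h1 : 0 ≤ S u := hSnonneg u hu.1
    have h2 : S u ≤ S t := hSmono hu.1 ht hu.2
    have h3 : 0 ≤ μ * u := mul_nonneg hμ.le hu.1
    have h4 : μ * u ≤ μ * t := by nlinarith [hu.2]
    rw [abs_le]
    constructor <;> nlinarith
  have hgM : ∀ u ∈ Icc (0:ℝ) t, |S u - μ * u| ≤ M :=
    fun u hu => le_csSup hbdd ⟨u, hu, rfl⟩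
  have hM0 : 0 ≤ M := by
    have := hgM 0 ⟨le_rfl, ht⟩
    simp [hS0] at this
    linarith [abs_nonneg (S 0 - μ * 0), hgM 0 ⟨le_rfl, ht⟩]
  set h : ℝ → ℝ := fun s => f (Y s) - f (ρ s) with hh
  have hρint : ∀ u ≥ (0:ℝ), IntervalIntegrable (fun s => f (ρ s)) volume 0 u := by
    intro u hu
    have : ContinuousOn (fun s => f (ρ s)) (uIcc 0 u) :=
      hfcont.comp_continuousOn (hρcont.mono (by rw [uIcc_of_le hu]; exact Icc_subset_Ici_self))
    exact this.intervalIntegrable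
  have hint : ∀ u ∈ Icc (0:ℝ) t, IntervalIntegrable h volume 0 u :=
    fun u hu => (hYint u hu.1).sub (hρint u hu.1)
  -- key identity : Y u - ρ u = φ u - (S u - μ u)
  have hkey : ∀ u ∈ Icc (0:ℝ) t,
      Y u - ρ u = (∫ x in (0:ℝ)..u, h x) - (S u - μ * u) := by
    intro u hu
    rw [hY u hu.1, hρ u hu.1, hh,
      intervalIntegral.integral_sub (hYint u hu.1) (hρint u hu.1)]
    ring
  have hsign1 : ∀ s ∈ Icc (0:ℝ) t, M < ∫ x in (0:ℝ)..s, h x → h s ≤ 0 := by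
    intro s hs hMlt
    have hg := hgM s hs
    have hd : 0 < Y s - ρ s := by
      rw [hkey s hs]
      have := abs_le.1 hg
      linarith
    have := hfanti (le_of_lt (by linarith : ρ s < Y s))
    simpa [hh] using sub_nonpos.2 this
  have hsign2 : ∀ s ∈ Icc (0:ℝ) t, M < ∫ x in (0:ℝ)..s, (-h) x → (-h) s ≤ 0 := by
    intro s hs hMlt
    simp only [Pi.neg_apply, intervalIntegral.integral_neg] at hMlt
    have hg := hgM s hs
    have hd : Y s - ρ s < 0 := by
      rw [hkey s hs]
      have := abs_le.1 hg
      linarith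
    have := hfanti (le_of_lt (by linarith : Y s < ρ s))
    simp only [Pi.neg_apply, hh, neg_sub]
    linarith
  have hintT := hint t ⟨ht, le_rfl⟩
  have hb1 := barrier h t ht hintT M hM0 hsign1 t ⟨ht, le_rfl⟩
  have hb2 := barrier (-h) t ht hintT.neg M hM0 hsign2 t ⟨ht, le_rfl⟩
  simp only [Pi.neg_apply, intervalIntegral.integral_neg] at hb2
  have hφabs : |∫ x in (0:ℝ)..t, h x| ≤ M := abs_le.2 ⟨by linarith, hb1⟩
  have := hgM t ⟨ht, le_rfl⟩
  calc |Y t - ρ t| = |(∫ x in (0:ℝ)..t, h x) - (S t - μ * t)| := by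
        rw [hkey t ⟨ht, le_rfl⟩]
    _ ≤ |∫ x in (0:ℝ)..t, h x| + |S t - μ * t| := abs_sub _ _
    _ ≤ M + M := add_le_add hφabs this
    _ = 2 * M := by ring
end

section
/- Let μ > 0, let f : ℝ → ℝ be a positive, nonincreasing, continuous function with f(y) ≤ μ/2 for all y ∈ ℝ, let z > 0, let S : [0,∞) → [0,∞) be right-continuous nondecreasing with S(0) = 0, let Y solve Y_t = z − S_t + ∫_0^t f(Y_s) ds, and let ρ be the continuous solution of ρ_t = z − μt + ∫_0^t f(ρ_s) ds (so ρ is strictly decreasing with derivative f(ρ_t) − μ ≤ −μ/2). Then for every t ≥ 0, |∫_0^t f(Y_s) ds − ∫_0^t f(ρ_s) ds| ≤ (4/μ) · M_t · f(ρ_t − 2M_t), where M_t := sup_{0 ≤ u ≤ t} |S_u − μu|. -/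
open MeasureTheory Filter Set

/-!
Write `I s = ∫₀ˢ (f (Y u) - f (ρ u)) du`, so that `Y - ρ = I - (S - μ ·)` with `|S - μ ·| ≤ M`.
While `I > M` we have `Y > ρ`, hence `f ∘ Y ≤ f ∘ ρ` and `I` cannot increase; symmetrically below
`-M`. Thus `|I| ≤ M` and `|Y - ρ| ≤ 2M` on `[0, t]`, and since `f` is antitone, `I t` lies between
`∫₀ᵗ (f (ρ + 2M) - f ρ)` and `∫₀ᵗ (f (ρ - 2M) - f ρ)`. As `ρ' = f ∘ ρ - μ ≤ -μ/2`, the substitution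
`y = ρ s` bounds these integrals by `2/μ` times `∫_{ρ t}^{ρ 0} (f (y - 2M) - f y) dy` (resp. the
`+2M` analogue), which telescopes to at most `2M f (ρ t - 2M)`.
-/

theorem MonotoneOn.bddAbove_image_abs_sub {S g : ℝ → ℝ} {a b : ℝ} (hS : MonotoneOn S (Icc a b))
    (hg : MonotoneOn g (Icc a b)) : BddAbove ((fun u => |S u - g u|) '' Icc a b) := by
  refine ⟨|S a| + |S b| + |g a| + |g b|, ?_⟩
  rintro _ ⟨u, hu, rfl⟩
  have ha := left_mem_Icc.2 (hu.1.trans hu.2)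
  have hb := right_mem_Icc.2 (hu.1.trans hu.2)
  have := hS ha hu hu.1; have := hS hu hb hu.2; have := hg ha hu hu.1; have := hg hu hb hu.2
  rw [abs_le]
  constructor <;> linarith [le_abs_self (S a), neg_abs_le (S a), le_abs_self (S b),
    neg_abs_le (S b), le_abs_self (g a), neg_abs_le (g a), le_abs_self (g b), neg_abs_le (g b)]

theorem intervalIntegral.integral_le_of_nonpos_above {φ : ℝ → ℝ} {a b M : ℝ}
    (hφ : IntervalIntegrable φ volume a b) (hM : 0 ≤ M)
    (h : ∀ s ∈ Icc a b, M < ∫ u in a..s, φ u → φ s ≤ 0) :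
    ∀ s ∈ Icc a b, ∫ u in a..s, φ u ≤ M := by
  intro s hs
  have hab : a ≤ b := hs.1.trans hs.2
  have hsub : ∀ c ∈ Icc a b, ∀ d ∈ Icc a b, IntervalIntegrable φ volume c d :=
    fun c hc d hd => hφ.mono_set (uIcc_subset_uIcc (Icc_subset_uIcc hc) (Icc_subset_uIcc hd))
  have hcont := intervalIntegral.continuousOn_primitive_interval' hφ left_mem_uIcc
  rw [uIcc_of_le hab] at hcont
  refine IsClosed.mem_of_ge_of_forall_exists_gt (s := {x | ∫ u in a..x, φ u ≤ M}) ?_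
    (by simpa using hM) hs.1 ?_
  · rw [inter_comm]
    exact (hcont.mono (Icc_subset_Icc_right hs.2)).preimage_isClosed_of_isClosed
      isClosed_Icc isClosed_Iic
  · rintro x ⟨hxM, hx⟩
    have hxI : x ∈ Icc a b := ⟨hx.1, hx.2.le.trans hs.2⟩
    by_contra! hnone
    have habove : ∀ y ∈ Ioc x s, M < ∫ u in a..y, φ u := fun y hy => by
      by_contra! hy'
      exact hnone.subset ⟨hy', hy⟩
    have hdec : ∫ u in x..s, φ u ≤ 0 := by
      simpa using intervalIntegral.integral_mono_on_of_le_Ioo (g := fun _ => 0) hx.2.le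
        (hsub x hxI s hs) intervalIntegrable_const fun y hy =>
          h y ⟨hx.1.trans hy.1.le, hy.2.le.trans hs.2⟩ (habove y (Ioo_subset_Ioc_self hy))
    have hsplit := intervalIntegral.integral_add_adjacent_intervals
      (hsub a (left_mem_Icc.2 hab) x hxI) (hsub x hxI s hs)
    exact (habove s ⟨hx.2, le_rfl⟩).not_ge (by rw [← hsplit]; linarith [hxM.out])

theorem intervalIntegral.abs_integral_le_of_sign_outside {φ : ℝ → ℝ} {a b M : ℝ}
    (hφ : IntervalIntegrable φ volume a b) (hM : 0 ≤ M)
    (hpos : ∀ s ∈ Icc a b, M < ∫ u in a..s, φ u → φ s ≤ 0)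
    (hneg : ∀ s ∈ Icc a b, ∫ u in a..s, φ u < -M → 0 ≤ φ s) :
    ∀ s ∈ Icc a b, |∫ u in a..s, φ u| ≤ M := by
  intro s hs
  have hlow := integral_le_of_nonpos_above (φ := fun u => -φ u) hφ.neg hM (fun s hs h => by
    rw [intervalIntegral.integral_neg] at h
    exact neg_nonpos.2 (hneg s hs (by linarith))) s hs
  rw [intervalIntegral.integral_neg] at hlow
  exact abs_le.2 ⟨by linarith, integral_le_of_nonpos_above hφ hM hpos s hs⟩

theorem abs_sub_le_two_mul_of_eq_integral_sub {f Y ρ D : ℝ → ℝ} {a b M : ℝ} (hf : Antitone f)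
    (hint : IntervalIntegrable (fun s => f (Y s) - f (ρ s)) volume a b)
    (hD : ∀ s ∈ Icc a b, |D s| ≤ M)
    (heq : ∀ s ∈ Icc a b, Y s - ρ s = (∫ u in a..s, (f (Y u) - f (ρ u))) - D s) :
    ∀ s ∈ Icc a b, |Y s - ρ s| ≤ 2 * M := by
  intro s hs
  have hM : 0 ≤ M := (abs_nonneg _).trans (hD a (left_mem_Icc.2 (hs.1.trans hs.2)))
  have hI := intervalIntegral.abs_integral_le_of_sign_outside hint hM
    (fun u hu hIu => sub_nonpos.2 (hf (by linarith [heq u hu, (abs_le.1 (hD u hu)).2])))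
    (fun u hu hIu => sub_nonneg.2 (hf (by linarith [heq u hu, (abs_le.1 (hD u hu)).1]))) s hs
  rw [heq s hs]
  linarith [abs_sub _ _ |>.trans (add_le_add hI (hD s hs))]

theorem hasDerivAt_of_eq_sub_mul_add_integral {ρ F : ℝ → ℝ} {a z μ x : ℝ}
    (hF : ContinuousOn F (Ici a)) (hρ : ∀ s ≥ a, ρ s = z - μ * s + ∫ u in a..s, F u)
    (hx : a < x) : HasDerivAt ρ (F x - μ) x := by
  have hprim : HasDerivAt (fun s => ∫ u in a..s, F u) (F x) x :=
    intervalIntegral.integral_hasDerivAt_right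
      ((hF.mono (by simp [uIcc_of_le hx.le, Icc_subset_Ici_self])).intervalIntegrable)
      ((hF.mono Ioi_subset_Ici_self).stronglyMeasurableAtFilter isOpen_Ioi x hx)
      (hF.continuousAt (Ici_mem_nhds hx))
  have hlin : HasDerivAt (fun s => z - μ * s) (-μ) x := by
    simpa using ((hasDerivAt_id x).const_mul μ).const_sub z
  rw [sub_eq_neg_add]
  exact (hlin.add hprim).congr_of_eventuallyEq
    (eventually_of_mem (Ici_mem_nhds hx) fun s hs => hρ s hs)

theorem integral_comp_le_div_of_hasDerivWithinAt_le_neg {ρ ρ' g : ℝ → ℝ} {a b c : ℝ}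
    (hab : a ≤ b) (hc : 0 < c) (hρ : ContinuousOn ρ (Icc a b)) (hρ' : ContinuousOn ρ' (Icc a b))
    (hderiv : ∀ x ∈ Ioo a b, HasDerivWithinAt ρ (ρ' x) (Ioi x) x)
    (hle : ∀ x ∈ Icc a b, ρ' x ≤ -c) (hg : Continuous g) (hg0 : ∀ y, 0 ≤ g y) :
    ∫ x in a..b, g (ρ x) ≤ (∫ y in ρ b..ρ a, g y) / c := by
  rw [← uIcc_of_le hab] at hρ hρ'
  have hgρ : ContinuousOn (fun x => g (ρ x)) (uIcc a b) := hg.comp_continuousOn hρ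
  calc ∫ x in a..b, g (ρ x) ≤ ∫ x in a..b, -((g ∘ ρ) x * ρ' x) / c := by
        refine intervalIntegral.integral_mono_on hab hgρ.intervalIntegrable
          ((hgρ.mul hρ').neg.div_const c).intervalIntegrable fun x hx => ?_
        rw [le_div_iff₀ hc, Function.comp_apply, ← mul_neg]
        exact mul_le_mul_of_nonneg_left (by linarith [hle x hx]) (hg0 _)
    _ = (∫ y in ρ b..ρ a, g y) / c := by
        rw [intervalIntegral.integral_div, intervalIntegral.integral_neg,
          intervalIntegral.integral_comp_mul_deriv'' hρ (by simpa [hab] using hderiv) hρ'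
            hg.continuousOn, intervalIntegral.integral_symm, neg_neg]

theorem Antitone.integral_comp_sub_sub_le {f : ℝ → ℝ} (hf : Antitone f) (hf0 : ∀ y, 0 ≤ f y)
    (a b : ℝ) {c : ℝ} (hc : 0 ≤ c) : ∫ y in a..b, (f (y - c) - f y) ≤ c * f (a - c) := by
  have hint : ∀ p q : ℝ, IntervalIntegrable f volume p q := fun _ _ => hf.intervalIntegrable
  have hhead : ∫ y in a - c..a, f y ≤ c * f (a - c) := by
    simpa using intervalIntegral.integral_mono_on (by linarith : a - c ≤ a) (hint _ _)
      intervalIntegrable_const fun y hy => hf hy.1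
  have htail : 0 ≤ ∫ y in b - c..b, f y :=
    intervalIntegral.integral_nonneg (by linarith) fun y _ => hf0 y
  have hshift : Antitone fun y => f (y - c) := fun x y hxy => hf (sub_le_sub_right hxy c)
  rw [intervalIntegral.integral_sub hshift.intervalIntegrable (hint _ _),
    intervalIntegral.integral_comp_sub_right,
    intervalIntegral.integral_interval_sub_interval_comm (hint _ _) (hint _ _) (hint _ _)]
  linarith

theorem Antitone.integral_sub_comp_add_le {f : ℝ → ℝ} (hf : Antitone f) (hf0 : ∀ y, 0 ≤ f y)
    (a b : ℝ) {c : ℝ} (hc : 0 ≤ c) : ∫ y in a..b, (f y - f (y + c)) ≤ c * f a := by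
  have h := hf.integral_comp_sub_sub_le hf0 (a + c) (b + c) hc
  rw [← intervalIntegral.integral_comp_add_right] at h
  simpa using h

theorem abs_integral_sub_le_of_abs_sub_le {f Y ρ ρ' : ℝ → ℝ} {a b c δ : ℝ} (hab : a ≤ b)
    (hc : 0 < c) (hρ : ContinuousOn ρ (Icc a b)) (hρ' : ContinuousOn ρ' (Icc a b))
    (hderiv : ∀ x ∈ Ioo a b, HasDerivWithinAt ρ (ρ' x) (Ioi x) x)
    (hle : ∀ x ∈ Icc a b, ρ' x ≤ -c) (hf : Antitone f) (hfc : Continuous f) (hf0 : ∀ y, 0 ≤ f y)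
    (hY : IntervalIntegrable (fun s => f (Y s)) volume a b)
    (hYρ : ∀ s ∈ Icc a b, |Y s - ρ s| ≤ δ) :
    |∫ s in a..b, (f (Y s) - f (ρ s))| ≤ δ / c * f (ρ b - δ) := by
  have hδ : 0 ≤ δ := (abs_nonneg _).trans (hYρ a (left_mem_Icc.2 hab))
  have hρu : ContinuousOn ρ (uIcc a b) := by rwa [uIcc_of_le hab]
  have hcomp : ∀ d : ℝ, IntervalIntegrable (fun s => f (ρ s + d)) volume a b := fun d =>
    (hfc.comp_continuousOn (hρu.add continuousOn_const)).intervalIntegrable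
  have hfρ : IntervalIntegrable (fun s => f (ρ s)) volume a b := by simpa using hcomp 0
  have hneg : -∫ s in a..b, (f (Y s) - f (ρ s)) = ∫ s in a..b, (f (ρ s) - f (Y s)) := by
    rw [← intervalIntegral.integral_neg]
    simp only [neg_sub]
  rw [abs_le', hneg]
  constructor
  · calc ∫ s in a..b, (f (Y s) - f (ρ s)) ≤ ∫ s in a..b, (f (ρ s + -δ) - f (ρ s)) :=
          intervalIntegral.integral_mono_on hab (hY.sub hfρ) ((hcomp _).sub hfρ) fun s hs =>
            sub_le_sub_right (hf (by linarith [(abs_le.1 (hYρ s hs)).1])) _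
      _ ≤ (∫ y in ρ b..ρ a, (f (y - δ) - f y)) / c := by
          simpa [← sub_eq_add_neg] using integral_comp_le_div_of_hasDerivWithinAt_le_neg
            (g := fun y => f (y - δ) - f y) hab hc hρ hρ' hderiv hle (by fun_prop)
            fun y => sub_nonneg.2 (hf (by linarith))
      _ ≤ δ * f (ρ b - δ) / c :=
          div_le_div_of_nonneg_right (hf.integral_comp_sub_sub_le hf0 _ _ hδ) hc.le
      _ = δ / c * f (ρ b - δ) := by ring
  · calc ∫ s in a..b, (f (ρ s) - f (Y s)) ≤ ∫ s in a..b, (f (ρ s) - f (ρ s + δ)) :=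
          intervalIntegral.integral_mono_on hab (hfρ.sub hY) (hfρ.sub (hcomp _)) fun s hs =>
            sub_le_sub_left (hf (by linarith [(abs_le.1 (hYρ s hs)).2])) _
      _ ≤ (∫ y in ρ b..ρ a, (f y - f (y + δ))) / c :=
          integral_comp_le_div_of_hasDerivWithinAt_le_neg (g := fun y => f y - f (y + δ)) hab hc
            hρ hρ' hderiv hle (by fun_prop) fun y => sub_nonneg.2 (hf (by linarith))
      _ ≤ δ * f (ρ b) / c :=
          div_le_div_of_nonneg_right (hf.integral_sub_comp_add_le hf0 _ _ hδ) hc.le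
      _ ≤ δ * f (ρ b - δ) / c := by gcongr; exact hf (by linarith)
      _ = δ / c * f (ρ b - δ) := by ring

theorem pathwise_drift_estimate_general
    (μ : ℝ) (hμ : 0 < μ)
    (f : ℝ → ℝ) (hfpos : ∀ y, 0 < f y) (hfanti : Antitone f) (hfcont : Continuous f)
    (hfhalf : ∀ y, f y ≤ μ / 2)
    (z : ℝ)
    (S : ℝ → ℝ)
    (hSmono : MonotoneOn S (Ici (0 : ℝ)))
    (Y : ℝ → ℝ)
    (hYint : ∀ t ≥ (0 : ℝ), IntervalIntegrable (fun s => f (Y s)) volume 0 t)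
    (hY : ∀ t ≥ (0 : ℝ), Y t = z - S t + ∫ s in (0 : ℝ)..t, f (Y s))
    (ρ : ℝ → ℝ) (hρcont : ContinuousOn ρ (Ici (0 : ℝ)))
    (hρ : ∀ t ≥ (0 : ℝ), ρ t = z - μ * t + ∫ s in (0 : ℝ)..t, f (ρ s))
    (t : ℝ) (ht : 0 ≤ t) :
    |(∫ s in (0 : ℝ)..t, f (Y s)) - ∫ s in (0 : ℝ)..t, f (ρ s)| ≤
      (4 / μ) * sSup ((fun u => |S u - μ * u|) '' Icc 0 t) *
        f (ρ t - 2 * sSup ((fun u => |S u - μ * u|) '' Icc 0 t)) := by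
  set M := sSup ((fun u => |S u - μ * u|) '' Icc 0 t)
  have hM : ∀ u ∈ Icc 0 t, |S u - μ * u| ≤ M := fun u hu =>
    le_csSup ((hSmono.mono Icc_subset_Ici_self).bddAbove_image_abs_sub
      fun _ _ _ _ h => mul_le_mul_of_nonneg_left h hμ.le) (mem_image_of_mem _ hu)
  have hfρ : ∀ s ≥ (0 : ℝ), IntervalIntegrable (fun u => f (ρ u)) volume 0 s := fun s hs =>
    (hfcont.comp_continuousOn (hρcont.mono (by simp [uIcc_of_le hs, Icc_subset_Ici_self])))
      |>.intervalIntegrable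
  have hYρ : ∀ s ∈ Icc 0 t, |Y s - ρ s| ≤ 2 * M :=
    abs_sub_le_two_mul_of_eq_integral_sub hfanti ((hYint t ht).sub (hfρ t ht)) hM fun s hs => by
      rw [hY s hs.1, hρ s hs.1, intervalIntegral.integral_sub (hYint s hs.1) (hfρ s hs.1)]
      ring
  have hρderiv : ∀ x ∈ Ioo 0 t, HasDerivWithinAt ρ (f (ρ x) - μ) (Ioi x) x := fun x hx =>
    (hasDerivAt_of_eq_sub_mul_add_integral (hfcont.comp_continuousOn hρcont) hρ hx.1)
      |>.hasDerivWithinAt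
  have hρc : ContinuousOn ρ (Icc 0 t) := hρcont.mono Icc_subset_Ici_self
  have key := abs_integral_sub_le_of_abs_sub_le (ρ' := fun x => f (ρ x) - μ) ht (half_pos hμ) hρc
    ((hfcont.comp_continuousOn hρc).sub continuousOn_const) hρderiv
    (fun x _ => by linarith [hfhalf (ρ x)]) hfanti hfcont (fun y => (hfpos y).le) (hYint t ht) hYρ
  rw [← intervalIntegral.integral_sub (hYint t ht) (hfρ t ht)]
  convert key using 2
  ring

/-- Deterministic pathwise estimate: with `μ > 0`, `f` positive, nonincreasing,
continuous and `f ≤ μ/2` everywhere, `z > 0`, `S : [0,∞) → [0,∞)` right-continuous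
nondecreasing with `S 0 = 0`, `Y` a right-continuous solution of
`Y t = z - S t + ∫_0^t f (Y s) ds` and `ρ` the continuous solution of
`ρ t = z - μ t + ∫_0^t f (ρ s) ds`, one has for every `t ≥ 0`
`|∫_0^t f (Y s) ds - ∫_0^t f (ρ s) ds| ≤ (4/μ) M_t f (ρ t - 2 M_t)`,
where `M_t := sup_{0 ≤ u ≤ t} |S u - μ u|`. -/
theorem pathwise_drift_estimate
    (μ : ℝ) (hμ : 0 < μ)
    (f : ℝ → ℝ) (hfpos : ∀ y, 0 < f y) (hfanti : Antitone f) (hfcont : Continuous f)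
    (hfhalf : ∀ y, f y ≤ μ / 2)
    (z : ℝ) (hz : 0 < z)
    (S : ℝ → ℝ) (hS0 : S 0 = 0) (hSnonneg : ∀ t ≥ (0 : ℝ), 0 ≤ S t)
    (hSmono : MonotoneOn S (Ici (0 : ℝ)))
    (hSrc : ∀ t ≥ (0 : ℝ), ContinuousWithinAt S (Ici t) t)
    (Y : ℝ → ℝ)
    (hYrc : ∀ t ≥ (0 : ℝ), ContinuousWithinAt Y (Ici t) t)
    (hYint : ∀ t ≥ (0 : ℝ), IntervalIntegrable (fun s => f (Y s)) volume 0 t)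
    (hY : ∀ t ≥ (0 : ℝ), Y t = z - S t + ∫ s in (0 : ℝ)..t, f (Y s))
    (ρ : ℝ → ℝ) (hρcont : ContinuousOn ρ (Ici (0 : ℝ)))
    (hρ : ∀ t ≥ (0 : ℝ), ρ t = z - μ * t + ∫ s in (0 : ℝ)..t, f (ρ s))
    (t : ℝ) (ht : 0 ≤ t) :
    |(∫ s in (0 : ℝ)..t, f (Y s)) - ∫ s in (0 : ℝ)..t, f (ρ s)| ≤
      (4 / μ) * sSup ((fun u => |S u - μ * u|) '' Icc 0 t) *
        f (ρ t - 2 * sSup ((fun u => |S u - μ * u|) '' Icc 0 t)) :=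
  pathwise_drift_estimate_general μ hμ f hfpos hfanti hfcont hfhalf z S hSmono Y hYint hY ρ hρcont
    hρ t ht
end

section
/- Let μ > 0 and let f : ℝ → ℝ be a positive, nonincreasing, continuous function with f(y) ≤ μ/2 for all y ∈ ℝ. Define β(y) := ∫_0^y du/(μ − f(u)) for y ≥ 0, and for z > 0 set β_z := β(z). Then β is a strictly increasing continuously differentiable bijection from [0,∞) onto [0,∞), μ/μ-bounds z/μ ≤ β_z ≤ 2z/μ hold, and the function ρ^z(t) := β^{−1}(β_z − t), defined for 0 ≤ t ≤ β_z, satisfies ρ^z(0) = z, ρ^z(β_z) = 0, d/dt ρ^z(t) = f(ρ^z(t)) − μ (so d/dt ρ^z(t) ≤ −μ/2), and ρ^z(t) = z − μt + ∫_0^t f(ρ^z(s)) ds for all 0 ≤ t ≤ β_z. -/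
open MeasureTheory Filter Set

/-!
Since `f` is continuous with `0 < f ≤ μ/2`, the integrand `1/(μ - f)` is continuous with values
in `[1/μ, 2/μ]`, so `β` is `C¹` with derivative pinched between two positive constants. The mean
value theorem gives the linear bounds on `β`, hence `β` is an increasing homeomorphism of `ℝ`
fixing `0`. Its inverse has derivative `μ - f ∘ β⁻¹`, so `ρ^z = β⁻¹(β z - ·)` solves
`ρ' = f(ρ) - μ`, and the integral equation is the fundamental theorem of calculus.
-/

theorem surjective_of_pos_le_deriv {f : ℝ → ℝ} (hf : Differentiable ℝ f) {C : ℝ}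
    (hC : 0 < C) (hf' : ∀ x, C ≤ deriv f x) : Function.Surjective f := by
  have grow := mul_sub_le_image_sub_of_le_deriv hf hf'
  refine hf.continuous.surjective ?_ ?_
  · refine tendsto_atTop_mono' _ ?_
      (tendsto_atTop_add_const_right _ (f 0) (tendsto_id.const_mul_atTop hC))
    filter_upwards [eventually_ge_atTop 0] with x hx
    rw [id]
    linarith [grow hx]
  · refine tendsto_atBot_mono' _ ?_
      (tendsto_atBot_add_const_right _ (f 0) (tendsto_id.const_mul_atBot hC))
    filter_upwards [eventually_le_atBot 0] with x hx
    rw [id]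
    linarith [grow hx]

theorem StrictMono.bijOn_Ici_of_surjective {α δ : Type*} [LinearOrder α] [Preorder δ]
    {f : α → δ} (hf : StrictMono f) (hsurj : Function.Surjective f) (a : α) :
    BijOn f (Ici a) (Ici (f a)) := by
  have := (hf.orderIsoOfSurjective f hsurj).image_Ici a
  rw [StrictMono.coe_orderIsoOfSurjective] at this
  exact this ▸ hf.injective.injOn.bijOn_image

theorem StrictMono.invFunOn_Ici_eq_symm {α δ : Type*} [LinearOrder α] [Nonempty α]
    [Preorder δ] {f : α → δ} (hf : StrictMono f) (hsurj : Function.Surjective f) {a : α}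
    {s : δ} (hs : f a ≤ s) :
    Function.invFunOn f (Ici a) s = (hf.orderIsoOfSurjective f hsurj).symm s := by
  set e := hf.orderIsoOfSurjective f hsurj
  have hmem : e.symm s ∈ Ici a := by
    simpa [e] using e.symm.monotone hs
  calc Function.invFunOn f (Ici a) s = Function.invFunOn f (Ici a) (f (e.symm s)) := by
        rw [← StrictMono.coe_orderIsoOfSurjective f hf hsurj, e.apply_symm_apply]
    _ = e.symm s := hf.injective.injOn.leftInvOn_invFunOn hmem

theorem OrderIso.hasDerivAt_symm (e : ℝ ≃o ℝ) {y f' : ℝ} (he : HasDerivAt e f' (e.symm y))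
    (hf' : f' ≠ 0) : HasDerivAt e.symm f'⁻¹ y :=
  he.of_local_left_inverse e.symm.continuous.continuousAt hf'
    (Eventually.of_forall e.apply_symm_apply)

theorem eq_add_integral_of_hasDerivAt_comp {r F : ℝ → ℝ} (hF : Continuous F)
    (hr : ∀ t, HasDerivAt r (F (r t)) t) (t : ℝ) :
    r t = r 0 + ∫ s in (0 : ℝ)..t, F (r s) := by
  have hrc : Continuous r := continuous_iff_continuousAt.2 fun t => (hr t).continuousAt
  rw [intervalIntegral.integral_eq_sub_of_hasDerivAt (fun s _ => hr s)
    ((hF.comp hrc).intervalIntegrable _ _)]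
  ring

section ReversedInverse

variable {μ : ℝ} {f β : ℝ → ℝ}

theorem hasDerivAt_symm_sub (e : ℝ ≃o ℝ) (hμf : ∀ x, f x < μ)
    (he : ∀ x, HasDerivAt e (1 / (μ - f x)) x) (b t : ℝ) :
    HasDerivAt (fun t => e.symm (b - t)) (f (e.symm (b - t)) - μ) t := by
  have hinv :=
    e.hasDerivAt_symm (he _) (one_div_pos.2 (sub_pos.2 (hμf (e.symm (b - t))))).ne'
  exact (hinv.comp t ((hasDerivAt_id t).const_sub b)).congr_deriv
    (by rw [one_div, inv_inv]; ring)

theorem reversedInverse_properties (hf : Continuous f) (hμf : ∀ x, f x < μ)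
    (hβ' : ∀ x, HasDerivAt β (1 / (μ - f x)) x) (hmono : StrictMono β)
    (hsurj : Function.Surjective β) (hβ0 : β 0 = 0) {z : ℝ} (hz : 0 ≤ z) {ρ : ℝ → ℝ}
    (hρ : ∀ t, ρ t = Function.invFunOn β (Ici 0) (β z - t)) :
    ρ 0 = z ∧ ρ (β z) = 0 ∧
      (∀ t ∈ Icc 0 (β z), HasDerivWithinAt ρ (f (ρ t) - μ) (Icc 0 (β z)) t) ∧
      ∀ t ∈ Icc 0 (β z), ρ t = z - μ * t + ∫ s in (0 : ℝ)..t, f (ρ s) := by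
  set e := hmono.orderIsoOfSurjective β hsurj
  set r := fun t => e.symm (β z - t)
  have hρr : EqOn ρ r (Iic (β z)) := fun t ht => by
    rw [hρ, hmono.invFunOn_Ici_eq_symm hsurj (by rw [hβ0]; linarith [show t ≤ β z from ht])]
  have hr : ∀ t, HasDerivAt r (f (r t) - μ) t :=
    hasDerivAt_symm_sub e hμf (fun x => by rw [show ⇑e = β from rfl]; exact hβ' x) (β z)
  have hr0 : r 0 = z := by
    show e.symm (β z - 0) = z
    rw [sub_zero]
    exact e.symm_apply_apply z
  have hβz : 0 ≤ β z := hβ0 ▸ hmono.monotone hz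
  refine ⟨?_, ?_, fun t ht => ?_, fun t ht => ?_⟩
  · rw [hρr hβz, hr0]
  · rw [hρr (mem_Iic.2 le_rfl)]
    show e.symm (β z - β z) = 0
    rw [sub_self]
    exact (congrArg e.symm hβ0.symm).trans (e.symm_apply_apply 0)
  · rw [hρr ht.2]
    exact (hr t).hasDerivWithinAt.congr (hρr.mono Icc_subset_Iic_self) (hρr ht.2)
  · have hfr : Continuous fun s => f (r s) :=
      hf.comp (continuous_iff_continuousAt.2 fun t => (hr t).continuousAt)
    have hint : ∫ s in (0 : ℝ)..t, f (ρ s) = ∫ s in (0 : ℝ)..t, f (r s) := by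
      refine intervalIntegral.integral_congr fun s hs => ?_
      rw [uIcc_of_le ht.1] at hs
      rw [hρr (hs.2.trans ht.2)]
    rw [hρr ht.2, hint, eq_add_integral_of_hasDerivAt_comp (F := fun x => f x - μ)
      (hf.sub continuous_const) hr t, intervalIntegral.integral_sub
      (hfr.intervalIntegrable _ _) intervalIntegrable_const,
      intervalIntegral.integral_const, hr0]
    simp only [sub_zero, smul_eq_mul]
    ring

end ReversedInverse

theorem beta_rho_properties_general
    (μ : ℝ) (hμ : 0 < μ)
    (f : ℝ → ℝ) (hfpos : ∀ y, 0 < f y) (hfcont : Continuous f)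
    (hfhalf : ∀ y, f y ≤ μ / 2)
    (β : ℝ → ℝ) (hβ : ∀ y : ℝ, β y = ∫ u in (0 : ℝ)..y, 1 / (μ - f u))
    (ρ : ℝ → ℝ → ℝ)
    (hρ : ∀ z t : ℝ, ρ z t = Function.invFunOn β (Ici (0 : ℝ)) (β z - t)) :
    StrictMonoOn β (Ici (0 : ℝ)) ∧
    (∀ y : ℝ, HasDerivAt β (1 / (μ - f y)) y) ∧
    ContinuousOn (fun y => 1 / (μ - f y)) (Ici (0 : ℝ)) ∧
    BijOn β (Ici (0 : ℝ)) (Ici (0 : ℝ)) ∧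
    (∀ z > (0 : ℝ), z / μ ≤ β z ∧ β z ≤ 2 * z / μ) ∧
    (∀ z > (0 : ℝ),
      ρ z 0 = z ∧ ρ z (β z) = 0 ∧
      (∀ t ∈ Icc (0 : ℝ) (β z),
        HasDerivWithinAt (ρ z) (f (ρ z t) - μ) (Icc (0 : ℝ) (β z)) t ∧
          f (ρ z t) - μ ≤ -(μ / 2)) ∧
      (∀ t ∈ Icc (0 : ℝ) (β z),
        ρ z t = z - μ * t + ∫ s in (0 : ℝ)..t, f (ρ z s))) := by
  have hμf : ∀ y, f y < μ := fun y => by linarith [hfpos y, hfhalf y]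
  have hg : Continuous fun y => 1 / (μ - f y) :=
    continuous_const.div (continuous_const.sub hfcont) fun y => (sub_pos.2 (hμf y)).ne'
  have hβ' : ∀ y, HasDerivAt β (1 / (μ - f y)) y := by
    rw [funext hβ]
    exact fun y => (hg.integral_hasStrictDerivAt 0 y).hasDerivAt
  have hβd : Differentiable ℝ β := fun y => (hβ' y).differentiableAt
  have hlower : ∀ y, 1 / μ ≤ deriv β y := fun y => by
    rw [(hβ' y).deriv]
    exact one_div_le_one_div_of_le (sub_pos.2 (hμf y)) (by linarith [hfpos y])
  have hupper : ∀ y, deriv β y ≤ 2 / μ := fun y => by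
    rw [(hβ' y).deriv, ← one_div_div μ 2]
    exact one_div_le_one_div_of_le (half_pos hμ) (by linarith [hfhalf y])
  have hβ0 : β 0 = 0 := by simp [hβ]
  have hmono : StrictMono β :=
    strictMono_of_deriv_pos fun y => (one_div_pos.2 hμ).trans_le (hlower y)
  have hsurj := surjective_of_pos_le_deriv hβd (one_div_pos.2 hμ) hlower
  refine ⟨hmono.strictMonoOn _, hβ', hg.continuousOn, ?_, fun z hz => ⟨?_, ?_⟩,
    fun z hz => ?_⟩
  · simpa only [hβ0] using hmono.bijOn_Ici_of_surjective hsurj 0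
  · simpa only [hβ0, sub_zero, one_div_mul_eq_div] using
      mul_sub_le_image_sub_of_le_deriv hβd hlower hz.le
  · simpa only [hβ0, sub_zero, div_mul_eq_mul_div] using
      image_sub_le_mul_sub_of_deriv_le hβd hupper hz.le
  obtain ⟨h0, hβz, hderiv, hint⟩ :=
    reversedInverse_properties hfcont hμf hβ' hmono hsurj hβ0 hz.le (hρ z)
  exact ⟨h0, hβz, fun t ht => ⟨hderiv t ht, by linarith [hfhalf (ρ z t)]⟩, hint⟩

/-- Let `μ > 0` and let `f` be positive, nonincreasing, continuous with `f ≤ μ/2`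
everywhere.  Define `β y := ∫_0^y du/(μ - f u)` and, for `z > 0`,
`ρ^z t := β⁻¹(β z - t)` (the inverse taken on `[0,∞)`).  Then `β` is a strictly
increasing continuously differentiable bijection from `[0,∞)` onto `[0,∞)` with
derivative `1/(μ - f y)`, the bounds `z/μ ≤ β z ≤ 2z/μ` hold for `z > 0`, and for
`z > 0` the function `ρ^z` satisfies `ρ^z 0 = z`, `ρ^z (β z) = 0`, has derivative
`f (ρ^z t) - μ ≤ -μ/2` on `[0, β z]`, and solves
`ρ^z t = z - μ t + ∫_0^t f (ρ^z s) ds` on `[0, β z]`. -/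
theorem beta_rho_properties
    (μ : ℝ) (hμ : 0 < μ)
    (f : ℝ → ℝ) (hfpos : ∀ y, 0 < f y) (hfanti : Antitone f) (hfcont : Continuous f)
    (hfhalf : ∀ y, f y ≤ μ / 2)
    (β : ℝ → ℝ) (hβ : ∀ y : ℝ, β y = ∫ u in (0 : ℝ)..y, 1 / (μ - f u))
    (ρ : ℝ → ℝ → ℝ)
    (hρ : ∀ z t : ℝ, ρ z t = Function.invFunOn β (Ici (0 : ℝ)) (β z - t)) :
    StrictMonoOn β (Ici (0 : ℝ)) ∧
    (∀ y : ℝ, HasDerivAt β (1 / (μ - f y)) y) ∧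
    ContinuousOn (fun y => 1 / (μ - f y)) (Ici (0 : ℝ)) ∧
    BijOn β (Ici (0 : ℝ)) (Ici (0 : ℝ)) ∧
    (∀ z > (0 : ℝ), z / μ ≤ β z ∧ β z ≤ 2 * z / μ) ∧
    (∀ z > (0 : ℝ),
      ρ z 0 = z ∧ ρ z (β z) = 0 ∧
      (∀ t ∈ Icc (0 : ℝ) (β z),
        HasDerivWithinAt (ρ z) (f (ρ z t) - μ) (Icc (0 : ℝ) (β z)) t ∧
          f (ρ z t) - μ ≤ -(μ / 2)) ∧
      (∀ t ∈ Icc (0 : ℝ) (β z),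
        ρ z t = z - μ * t + ∫ s in (0 : ℝ)..t, f (ρ z s))) :=
  beta_rho_properties_general μ hμ f hfpos hfcont hfhalf β hβ ρ hρ
end

section
/- Let f : ℝ → ℝ be a positive, nonincreasing function, let z > 0, x ∈ ℝ with z > x, let S : [0,∞) → [0,∞) be right-continuous nondecreasing with S(0) = 0, and let Y solve Y_t = z − S_t + ∫_0^t f(Y_s) ds. Then: (a) Y_t ≥ z − S_t for all t ≥ 0; in particular, if S_t ≤ z − x then Y_s ≥ x for all s ≤ t; and (b) if Y_s ≥ x for all s ≤ t, then S_t ≤ z − x + t·f(x). -/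
open MeasureTheory Filter Set

/-- Deterministic pathwise statement: let `f` be positive and nonincreasing, `z > x`,
`z > 0`, let `S : [0,∞) → [0,∞)` be right-continuous nondecreasing with `S 0 = 0`, and
let `Y` solve `Y t = z - S t + ∫_0^t f (Y s) ds`.  Then (a) `Y t ≥ z - S t` for all
`t ≥ 0`; in particular if `S t ≤ z - x` then `Y s ≥ x` for all `0 ≤ s ≤ t`; and
(b) if `Y s ≥ x` for all `0 ≤ s ≤ t`, then `S t ≤ z - x + t * f x`. -/
theorem pathwise_passage_bounds
    (f : ℝ → ℝ) (hfpos : ∀ y, 0 < f y) (hfanti : Antitone f)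
    (z x : ℝ) (hz : 0 < z) (hxz : x < z)
    (S : ℝ → ℝ) (hS0 : S 0 = 0) (hSnonneg : ∀ t ≥ (0 : ℝ), 0 ≤ S t)
    (hSmono : MonotoneOn S (Ici (0 : ℝ)))
    (hSrc : ∀ t ≥ (0 : ℝ), ContinuousWithinAt S (Ici t) t)
    (Y : ℝ → ℝ)
    (hYint : ∀ t ≥ (0 : ℝ), IntervalIntegrable (fun s => f (Y s)) volume 0 t)
    (hY : ∀ t ≥ (0 : ℝ), Y t = z - S t + ∫ s in (0 : ℝ)..t, f (Y s)) :
    (∀ t ≥ (0 : ℝ), z - S t ≤ Y t) ∧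
    (∀ t ≥ (0 : ℝ), S t ≤ z - x → ∀ s : ℝ, 0 ≤ s → s ≤ t → x ≤ Y s) ∧
    (∀ t ≥ (0 : ℝ), (∀ s : ℝ, 0 ≤ s → s ≤ t → x ≤ Y s) → S t ≤ z - x + t * f x) := by
  have ha : ∀ t ≥ (0 : ℝ), z - S t ≤ Y t := by
    intro t ht
    rw [hY t ht]
    have : 0 ≤ ∫ s in (0 : ℝ)..t, f (Y s) :=
      intervalIntegral.integral_nonneg ht (fun u _ => (hfpos (Y u)).le)
    linarith
  refine ⟨ha, ?_, ?_⟩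
  · intro t ht hSt s hs hst
    have hSs : S s ≤ S t := hSmono hs (le_trans hs hst) hst
    have := ha s hs
    linarith
  · intro t ht hYx
    have hI : (∫ s in (0 : ℝ)..t, f (Y s)) ≤ ∫ _ in (0 : ℝ)..t, f x := by
      apply intervalIntegral.integral_mono_on ht (hYint t ht)
        (intervalIntegrable_const)
      intro u hu
      exact hfanti (hYx u hu.1 hu.2)
    rw [intervalIntegral.integral_const, smul_eq_mul, sub_zero] at hI
    have hYt := hYx t ht le_rfl
    have := hY t ht
    linarith
end

section
/- Let μ > 0 and let f : ℝ → ℝ be a positive, nonincreasing, continuous function with f(y) ≤ μ/2 for all y ∈ ℝ and f(y) → 0 as y → ∞. For z > 0 let β_z := ∫_0^z du/(μ − f(u)) and let ρ^z : [0, β_z] → [0, z] be the function with β(ρ^z(t)) = β_z − t (so ρ^z(β_z) = 0 and d/dt ρ^z(t) ≤ −μ/2). Then for every c > 0: ∫_{β_z − c√z}^{β_z} f(ρ^z(s)) ds ≤ ∫_0^{c√z} f(μ s / 2) ds, and ∫_0^{c√z} f(μ s/2) ds = o(√z) as z → ∞. -/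
open MeasureTheory Filter Set Asymptotics

/-- Let `μ > 0` and let `f` be positive, nonincreasing, continuous with `f ≤ μ/2`
everywhere and `f y → 0` as `y → ∞`.  Let `β z := ∫_0^z du/(μ - f u)` and let
`ρ^z t := β⁻¹(β z - t)` (inverse on `[0,∞)`), so that `ρ^z (β z) = 0`.  Then for every
`c > 0` (and every `z > 0` with `c√z ≤ β z`, so that the integration range lies in the
domain of `ρ^z`): `∫_{β z - c√z}^{β z} f (ρ^z s) ds ≤ ∫_0^{c√z} f (μ s / 2) ds`, and
`∫_0^{c√z} f (μ s / 2) ds = o(√z)` as `z → ∞`. -/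
theorem tail_integral_small
    (μ : ℝ) (hμ : 0 < μ)
    (f : ℝ → ℝ) (hfpos : ∀ y, 0 < f y) (hfanti : Antitone f) (hfcont : Continuous f)
    (hfhalf : ∀ y, f y ≤ μ / 2) (hflim : Tendsto f atTop (nhds 0))
    (β : ℝ → ℝ) (hβ : ∀ y : ℝ, β y = ∫ u in (0 : ℝ)..y, 1 / (μ - f u))
    (ρ : ℝ → ℝ → ℝ)
    (hρ : ∀ z t : ℝ, ρ z t = Function.invFunOn β (Ici (0 : ℝ)) (β z - t)) :
    (∀ c > (0 : ℝ), ∀ z > (0 : ℝ), c * Real.sqrt z ≤ β z →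
      (∫ s in (β z - c * Real.sqrt z)..(β z), f (ρ z s)) ≤
        ∫ s in (0 : ℝ)..(c * Real.sqrt z), f (μ * s / 2)) ∧
    (∀ c > (0 : ℝ),
      (fun z : ℝ => ∫ s in (0 : ℝ)..(c * Real.sqrt z), f (μ * s / 2)) =o[atTop]
        fun z : ℝ => Real.sqrt z) := by
  have hμ2 : (0:ℝ) < μ / 2 := by linarith
  have hden : ∀ u, μ / 2 ≤ μ - f u := fun u => by linarith [hfhalf u]
  have hdenpos : ∀ u, 0 < μ - f u := fun u => lt_of_lt_of_le hμ2 (hden u)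
  have hgcont : Continuous fun u => 1 / (μ - f u) :=
    continuous_const.div (continuous_const.sub hfcont) (fun u => (hdenpos u).ne')
  have hgint : ∀ a b : ℝ, IntervalIntegrable (fun u => 1 / (μ - f u)) volume a b :=
    fun a b => hgcont.intervalIntegrable a b
  have hβ0 : β 0 = 0 := by rw [hβ]; simp
  -- β is strictly monotone
  have hβmono : StrictMono β := by
    intro y₁ y₂ h
    have hsplit : (∫ u in (0:ℝ)..y₁, 1/(μ - f u)) + ∫ u in y₁..y₂, 1/(μ - f u)
        = ∫ u in (0:ℝ)..y₂, 1/(μ - f u) :=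
      intervalIntegral.integral_add_adjacent_intervals (hgint 0 y₁) (hgint y₁ y₂)
    have hlb : (y₂ - y₁) * (1/μ) ≤ ∫ u in y₁..y₂, 1/(μ - f u) := by
      have := intervalIntegral.integral_mono_on h.le
        (intervalIntegrable_const (c := 1/μ)) (hgint y₁ y₂)
        (fun u _ => by
          rw [div_le_div_iff₀ hμ (hdenpos u)]
          nlinarith [(hfpos u).le])
      simpa [intervalIntegral.integral_const, smul_eq_mul] using this
    have : 0 < ∫ u in y₁..y₂, 1/(μ - f u) := by
      have : 0 < (y₂ - y₁) * (1/μ) := mul_pos (by linarith) (by positivity)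
      linarith
    rw [hβ y₁, hβ y₂]
    linarith
  -- β y ≤ 2 y / μ for y ≥ 0
  have hβub : ∀ y : ℝ, 0 ≤ y → β y ≤ 2 / μ * y := by
    intro y hy
    have hub : (∫ u in (0:ℝ)..y, 1/(μ - f u)) ≤ y * 2 / μ := by
      have := intervalIntegral.integral_mono_on hy (hgint 0 y)
        (intervalIntegrable_const (c := 2/μ))
        (fun u _ => by
          rw [div_le_div_iff₀ (hdenpos u) hμ]
          nlinarith [hden u])
      simpa [intervalIntegral.integral_const, smul_eq_mul] using this
    rw [hβ]
    calc (∫ u in (0:ℝ)..y, 1/(μ - f u)) ≤ y * 2 / μ := hub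
    _ = 2 / μ * y := by ring
  have hβcont : Continuous β := by
    have : Continuous fun y => ∫ u in (0:ℝ)..y, 1/(μ - f u) :=
      intervalIntegral.continuous_primitive hgint 0
    exact this.congr fun y => (hβ y).symm
  -- key inverse facts
  have hinv : ∀ z : ℝ, 0 ≤ z → ∀ s : ℝ, 0 ≤ s → s ≤ β z →
      Function.invFunOn β (Ici (0:ℝ)) s ∈ Ici (0:ℝ) ∧
      β (Function.invFunOn β (Ici (0:ℝ)) s) = s := by
    intro z hz s hs0 hsz
    have hmem : s ∈ β '' (Icc 0 z) := by
      have := intermediate_value_Icc hz hβcont.continuousOn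
      exact this ⟨by rwa [hβ0], hsz⟩
    obtain ⟨y, hy, hby⟩ := hmem
    have hex : ∃ a ∈ Ici (0:ℝ), β a = s := ⟨y, hy.1, hby⟩
    exact ⟨Function.invFunOn_mem hex, Function.invFunOn_eq hex⟩
  constructor
  · -- Part 1
    intro c hc z hz hcz
    set R := c * Real.sqrt z with hR
    have hR0 : 0 ≤ R := by positivity
    have hz0 : (0:ℝ) ≤ z := hz.le
    -- for s in [0, R], ρ z (β z - s) = invFunOn β (Ici 0) s and satisfies bounds
    have hkey : ∀ s ∈ Icc (0:ℝ) R, μ * s / 2 ≤ ρ z (β z - s) ∧ 0 ≤ ρ z (β z - s) := by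
      intro s hs
      have hsβ : s ≤ β z := le_trans hs.2 hcz
      obtain ⟨hy0, hby⟩ := hinv z hz0 s hs.1 hsβ
      rw [hρ]
      have heq : β z - (β z - s) = s := by ring
      rw [heq]
      refine ⟨?_, hy0⟩
      have := hβub _ hy0
      rw [hby] at this
      rw [div_mul_eq_mul_div, le_div_iff₀ hμ] at this
      linarith
    -- change of variables
    have hcov : (∫ s in (β z - R)..(β z), f (ρ z s))
        = ∫ s in (0:ℝ)..R, f (ρ z (β z - s)) := by
      rw [intervalIntegral.integral_comp_sub_left (fun x => f (ρ z x)) (β z)]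
      norm_num
    rw [hcov]
    -- monotonicity of the composed function for integrability
    have hmono : MonotoneOn (fun s => ρ z (β z - s)) (Icc (0:ℝ) R) := by
      intro s₁ h₁ s₂ h₂ h12
      have h1β : s₁ ≤ β z := le_trans h₁.2 hcz
      have h2β : s₂ ≤ β z := le_trans h₂.2 hcz
      obtain ⟨hy1, hb1⟩ := hinv z hz0 s₁ h₁.1 h1β
      obtain ⟨hy2, hb2⟩ := hinv z hz0 s₂ h₂.1 h2β
      simp only [hρ]
      have e1 : β z - (β z - s₁) = s₁ := by ring
      have e2 : β z - (β z - s₂) = s₂ := by ring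
      rw [e1, e2]
      exact hβmono.le_iff_le.mp (by rw [hb1, hb2]; exact h12)
    have hanti : AntitoneOn (fun s => f (ρ z (β z - s))) (Icc (0:ℝ) R) :=
      fun s₁ h₁ s₂ h₂ h12 => hfanti (hmono h₁ h₂ h12)
    have hint1 : IntervalIntegrable (fun s => f (ρ z (β z - s))) volume 0 R := by
      apply AntitoneOn.intervalIntegrable
      rwa [uIcc_of_le hR0]
    have hint2 : IntervalIntegrable (fun s => f (μ * s / 2)) volume 0 R :=
      (hfcont.comp ((continuous_const.mul continuous_id).div_const 2)).intervalIntegrable 0 R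
    exact intervalIntegral.integral_mono_on hR0 hint1 hint2
      (fun s hs => hfanti (hkey s hs).1)
  · -- Part 2
    intro c hc
    rw [isLittleO_iff]
    intro ε hε
    -- choose M with f y ≤ ε/(2c) for y ≥ M
    have hδ : (0:ℝ) < ε / (2 * c) := by positivity
    obtain ⟨M, hM⟩ : ∃ M : ℝ, ∀ y ≥ M, f y ≤ ε / (2 * c) :=
      eventually_atTop.mp (hflim.eventually (eventually_le_nhds hδ))
    set A : ℝ := max (2 * M / μ) 0 with hA
    have hA0 : 0 ≤ A := le_max_right _ _
    -- eventual bound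
    have hev : ∀ᶠ z : ℝ in atTop, A ≤ c * Real.sqrt z ∧ μ / 2 * A ≤ ε / 2 * Real.sqrt z := by
      have hK : ∀ᶠ z : ℝ in atTop, (max (A / c) (μ * A / ε))^2 ≤ z := eventually_ge_atTop _
      filter_upwards [hK] with z hz
      have hs : max (A / c) (μ * A / ε) ≤ Real.sqrt z := Real.le_sqrt_of_sq_le hz
      have h1 : A / c ≤ Real.sqrt z := le_trans (le_max_left _ _) hs
      have h2 : μ * A / ε ≤ Real.sqrt z := le_trans (le_max_right _ _) hs
      constructor
      · rw [div_le_iff₀ hc] at h1; linarith [mul_comm (Real.sqrt z) c]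
      · rw [div_le_iff₀ hε] at h2; nlinarith
    filter_upwards [hev] with z hz
    obtain ⟨hz1, hz2⟩ := hz
    set S : ℝ := c * Real.sqrt z with hS
    have hsqrt0 : 0 ≤ Real.sqrt z := Real.sqrt_nonneg z
    have hS0 : 0 ≤ S := by positivity
    have hgc : Continuous (fun s : ℝ => f (μ * s / 2)) := hfcont.comp ((continuous_const.mul continuous_id).div_const 2)
    have hint : ∀ a b : ℝ, IntervalIntegrable (fun s => f (μ * s / 2)) volume a b :=
      fun a b => hgc.intervalIntegrable a b
    have hsplit : (∫ s in (0:ℝ)..S, f (μ * s / 2))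
        = (∫ s in (0:ℝ)..A, f (μ * s / 2)) + ∫ s in A..S, f (μ * s / 2) :=
      (intervalIntegral.integral_add_adjacent_intervals (hint 0 A) (hint A S)).symm
    have hI1 : (∫ s in (0:ℝ)..A, f (μ * s / 2)) ≤ μ * A / 2 := by
      have := intervalIntegral.integral_mono_on hA0 (hint 0 A)
        (intervalIntegrable_const (c := μ / 2)) (fun u _ => hfhalf _)
      simpa [intervalIntegral.integral_const, smul_eq_mul, mul_comm] using this
    have hI2 : (∫ s in A..S, f (μ * s / 2)) ≤ (S - A) * ε / (2 * c) := by
      have := intervalIntegral.integral_mono_on hz1 (hint A S)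
        (intervalIntegrable_const (c := ε / (2 * c)))
        (fun u hu => hM (μ * u / 2) (by
          have hAM : 2 * M / μ ≤ A := le_max_left _ _
          have : 2 * M / μ ≤ u := le_trans hAM hu.1
          rw [div_le_iff₀ hμ] at this
          linarith))
      simpa [intervalIntegral.integral_const, smul_eq_mul] using this
    have hnn : 0 ≤ ∫ s in (0:ℝ)..S, f (μ * s / 2) :=
      intervalIntegral.integral_nonneg hS0 (fun u _ => (hfpos _).le)
    rw [Real.norm_of_nonneg hnn, Real.norm_of_nonneg hsqrt0]
    have hI2' : (S - A) * ε / (2 * c) ≤ ε / 2 * Real.sqrt z := by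
      have h1 : (S - A) * ε / (2 * c) ≤ S * (ε / (2 * c)) := by
        rw [mul_div_assoc]
        exact mul_le_mul_of_nonneg_right (by linarith) (le_of_lt hδ)
      have h2 : S * (ε / (2 * c)) = ε / 2 * Real.sqrt z := by
        rw [hS]; field_simp
      linarith
    rw [hsplit]
    linarith
end

section
/- Let f : ℝ → ℝ be a positive, nonincreasing, continuous function, let z > 0, and let S : [0,∞) → [0,∞) be a right-continuous nondecreasing function with S(0) = 0. Then the integral equation Y_t = z − S_t + ∫_0^t f(Y_s) ds, t ≥ 0, has exactly one right-continuous solution Y : [0,∞) → ℝ. -/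
/-!
Because `f` is nonincreasing, the drift is one-sided Lipschitz: after the last time at which
`Y₁ ≤ Y₂`, the difference `Y₁ - Y₂` can only decrease, so two solutions coincide. The same
comparison makes the solutions of the delayed equations (the unknown read `ε` time units late,
solvable forward step by step) Cauchy as `ε → 0`: their difference grows at most by the `L¹` norm
of the delay defects, which vanishes because the nonincreasing forcing `z - S` is continuous
almost everywhere and `f` is uniformly continuous on compacts. Dominated convergence shows that
the limit solves the equation, and right-continuity is inherited from `S`.
-/

open MeasureTheory Filter Set Topology intervalIntegral

theorem integral_le_integral_of_le_of_integral_pos {k e : ℝ → ℝ} {a b : ℝ} (hab : a ≤ b)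
    (hk : IntervalIntegrable k volume a b) (he : IntervalIntegrable e volume a b)
    (he0 : ∀ s ∈ Icc a b, 0 ≤ e s)
    (hke : ∀ s ∈ Icc a b, 0 < ∫ x in a..s, k x → k s ≤ e s) :
    ∫ s in a..b, k s ≤ ∫ s in a..b, e s := by
  have hP : ContinuousOn (fun x => ∫ s in a..x, k s) (Icc a b) := by
    simpa only [uIcc_of_le hab] using continuousOn_primitive_interval' hk left_mem_uIcc
  have hA : IsCompact (Icc a b ∩ (fun x => ∫ s in a..x, k s) ⁻¹' Iic 0) :=
    isCompact_Icc.of_isClosed_subset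
      (hP.preimage_isClosed_of_isClosed isClosed_Icc isClosed_Iic) inter_subset_left
  obtain ⟨τ, ⟨⟨hτa, hτb⟩, hPτ⟩, hτmax⟩ := hA.exists_isGreatest
    ⟨a, left_mem_Icc.2 hab, by simp only [mem_preimage, integral_same, mem_Iic, le_refl]⟩
  have hsub : uIcc τ b ⊆ uIcc a b := uIcc_subset_uIcc (mem_uIcc_of_le hτa hτb) right_mem_uIcc
  have hkeτ : ∀ s ∈ Ioo τ b, k s ≤ e s := fun s hs =>
    hke s ⟨hτa.trans hs.1.le, hs.2.le⟩ <| not_le.1 fun h =>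
      (hτmax ⟨⟨hτa.trans hs.1.le, hs.2.le⟩, h⟩).not_gt hs.1
  calc ∫ s in a..b, k s = (∫ s in a..τ, k s) + ∫ s in τ..b, k s :=
        (integral_add_adjacent_intervals
          (hk.mono_set (uIcc_subset_uIcc left_mem_uIcc (mem_uIcc_of_le hτa hτb)))
          (hk.mono_set hsub)).symm
    _ ≤ 0 + ∫ s in τ..b, e s :=
        add_le_add hPτ
          (integral_mono_on_of_le_Ioo hτb (hk.mono_set hsub) (he.mono_set hsub) hkeτ)
    _ ≤ ∫ s in a..b, e s := by
        rw [zero_add]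
        exact integral_mono_interval hτa hτb le_rfl
          ((ae_restrict_iff' measurableSet_Ioc).2 (ae_of_all _ fun s hs =>
            he0 s (Ioc_subset_Icc_self hs))) he

section Uniqueness

variable {f a Y₁ Y₂ : ℝ → ℝ}

theorem le_of_eq_add_integral (hf : Antitone f)
    (hi₁ : ∀ t ≥ (0 : ℝ), IntervalIntegrable (fun s => f (Y₁ s)) volume 0 t)
    (hi₂ : ∀ t ≥ (0 : ℝ), IntervalIntegrable (fun s => f (Y₂ s)) volume 0 t)
    (he₁ : ∀ t ≥ (0 : ℝ), Y₁ t = a t + ∫ s in (0 : ℝ)..t, f (Y₁ s))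
    (he₂ : ∀ t ≥ (0 : ℝ), Y₂ t = a t + ∫ s in (0 : ℝ)..t, f (Y₂ s)) {t : ℝ} (ht : 0 ≤ t) :
    Y₁ t ≤ Y₂ t := by
  have hdiff : ∀ s ≥ (0 : ℝ), Y₁ s - Y₂ s = ∫ x in (0 : ℝ)..s, (f (Y₁ x) - f (Y₂ x)) :=
    fun s hs => by
      rw [integral_sub (hi₁ s hs) (hi₂ s hs), he₁ s hs, he₂ s hs]
      ring
  have key := integral_le_integral_of_le_of_integral_pos ht ((hi₁ t ht).sub (hi₂ t ht))
    intervalIntegrable_const (fun _ _ => le_rfl) fun s hs hpos => by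
      rw [← hdiff s hs.1] at hpos
      exact sub_nonpos.2 (hf (sub_pos.1 hpos).le)
  exact sub_nonpos.1 ((hdiff t ht).trans_le (key.trans_eq integral_zero))

theorem eq_of_eq_add_integral (hf : Antitone f)
    (hi₁ : ∀ t ≥ (0 : ℝ), IntervalIntegrable (fun s => f (Y₁ s)) volume 0 t)
    (hi₂ : ∀ t ≥ (0 : ℝ), IntervalIntegrable (fun s => f (Y₂ s)) volume 0 t)
    (he₁ : ∀ t ≥ (0 : ℝ), Y₁ t = a t + ∫ s in (0 : ℝ)..t, f (Y₁ s))
    (he₂ : ∀ t ≥ (0 : ℝ), Y₂ t = a t + ∫ s in (0 : ℝ)..t, f (Y₂ s)) {t : ℝ} (ht : 0 ≤ t) :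
    Y₁ t = Y₂ t :=
  le_antisymm (le_of_eq_add_integral hf hi₁ hi₂ he₁ he₂ ht)
    (le_of_eq_add_integral hf hi₂ hi₁ he₂ he₁ ht)

end Uniqueness

theorem continuousWithinAt_Ici_of_eq_add_integral {Y a g : ℝ → ℝ} {t : ℝ} (ht : 0 ≤ t)
    (hY : ∀ x ≥ t, Y x = a x + ∫ s in (0 : ℝ)..x, g s) (ha : ContinuousWithinAt a (Ici t) t)
    (hg : IntervalIntegrable g volume 0 (t + 1)) : ContinuousWithinAt Y (Ici t) t := by
  have hP : ContinuousWithinAt (fun x => ∫ s in (0 : ℝ)..x, g s) (Ici t) t :=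
    (continuousWithinAt_primitive (b₁ := t) (b₂ := t + 1) Real.volume_singleton
      (by rwa [min_eq_left ht, max_eq_right (by linarith)])).mono_of_mem_nhdsWithin
      (Icc_mem_nhdsGE (by linarith))
  exact (ha.add hP).congr (fun x hx => hY x hx) (hY t le_rfl)

theorem UniformContinuousOn.tendsto_dist_comp {α β ι : Type*} [PseudoMetricSpace α]
    [PseudoMetricSpace β] {f : α → β} {s : Set α} (hf : UniformContinuousOn f s) {l : Filter ι}
    {x y : ι → α} (hx : ∀ᶠ i in l, x i ∈ s) (hy : ∀ᶠ i in l, y i ∈ s)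
    (hxy : Tendsto (fun i => dist (x i) (y i)) l (𝓝 0)) :
    Tendsto (fun i => dist (f (x i)) (f (y i))) l (𝓝 0) :=
  tendsto_uniformity_iff_dist_tendsto_zero.1 <| Tendsto.comp (f := fun i => (x i, y i)) hf <|
    tendsto_inf.2 ⟨tendsto_uniformity_iff_dist_tendsto_zero.2 hxy, tendsto_principal.2 (hx.and hy)⟩

theorem intervalIntegrable_of_norm_le {g : ℝ → ℝ} {x y C : ℝ}
    (hg : AEStronglyMeasurable g (volume.restrict (uIoc x y)))
    (hC : ∀ s ∈ uIoc x y, ‖g s‖ ≤ C) : IntervalIntegrable g volume x y :=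
  (intervalIntegrable_const (c := C)).mono_fun hg <| (ae_restrict_iff' measurableSet_uIoc).2 <|
    ae_of_all _ fun s hs => (hC s hs).trans (le_abs_self C)

section Drift

variable {f a V : ℝ → ℝ} {s t : ℝ}

theorem apply_add_le_apply (hf : Antitone f) (ha : Antitone a) {v : ℝ} (hv : 0 ≤ v)
    (hst : s ≤ t) : f (a s + v) ≤ f (a t) :=
  hf (by linarith [ha hst])

theorem intervalIntegrable_apply_add (hf0 : ∀ y, 0 ≤ f y) (hf : Antitone f) (ha : Antitone a)
    (hV0 : ∀ x ≥ 0, 0 ≤ V x) (ht : 0 ≤ t)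
    (hm : AEStronglyMeasurable (fun s => f (a s + V s)) (volume.restrict (uIoc 0 t))) :
    IntervalIntegrable (fun s => f (a s + V s)) volume 0 t :=
  intervalIntegrable_of_norm_le hm fun s hs => by
    rw [uIoc_of_le ht] at hs
    rw [Real.norm_eq_abs, abs_of_nonneg (hf0 _)]
    exact apply_add_le_apply hf ha (hV0 s hs.1.le) hs.2

variable {U : ℕ → ℝ → ℝ}

theorem intervalIntegrable_apply_add_of_tendsto (hf0 : ∀ y, 0 ≤ f y) (hf : Antitone f)
    (hfc : Continuous f) (ha : Antitone a) (hU : ∀ n, Measurable (U n))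
    (hV0 : ∀ x ≥ 0, 0 ≤ V x) (ht : 0 ≤ t)
    (hUV : ∀ s ∈ Ioc 0 t, Tendsto (fun n => U n s) atTop (𝓝 (V s))) :
    IntervalIntegrable (fun s => f (a s + V s)) volume 0 t :=
  intervalIntegrable_apply_add hf0 hf ha hV0 ht <| aestronglyMeasurable_of_tendsto_ae atTop
    (fun n => (hfc.measurable.comp (ha.measurable.add (hU n))).aestronglyMeasurable) <|
    (ae_restrict_iff' measurableSet_uIoc).2 <| ae_of_all _ fun s hs =>
      (hfc.tendsto _).comp ((hUV s (uIoc_of_le ht ▸ hs)).const_add (a s))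

theorem tendsto_integral_apply_add (hf0 : ∀ y, 0 ≤ f y) (hf : Antitone f)
    (hfc : Continuous f) (ha : Antitone a) (hU : ∀ n, Measurable (U n))
    (hU0 : ∀ n, ∀ x ≥ 0, 0 ≤ U n x) (ht : 0 ≤ t)
    (hUV : ∀ s ∈ Ioc 0 t, Tendsto (fun n => U n s) atTop (𝓝 (V s))) :
    Tendsto (fun n => ∫ s in (0 : ℝ)..t, f (a s + U n s)) atTop
      (𝓝 (∫ s in (0 : ℝ)..t, f (a s + V s))) :=
  tendsto_integral_filter_of_dominated_convergence (fun _ => f (a t))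
    (Eventually.of_forall fun n =>
      (hfc.measurable.comp (ha.measurable.add (hU n))).aestronglyMeasurable)
    (Eventually.of_forall fun n => ae_of_all _ fun s hs => by
      rw [uIoc_of_le ht] at hs
      rw [Real.norm_eq_abs, abs_of_nonneg (hf0 _)]
      exact apply_add_le_apply hf ha (hU0 n s hs.1.le) hs.2)
    intervalIntegrable_const <| ae_of_all _ fun s hs =>
      (hfc.tendsto _).comp ((hUV s (uIoc_of_le ht ▸ hs)).const_add (a s))

end Drift

section Delay

variable {f a V W : ℝ → ℝ} {ε η r s t : ℝ}

def delay (ε s : ℝ) : ℝ := max (s - ε) 0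

theorem continuous_delay : Continuous (delay ε) :=
  (continuous_sub_right ε).max continuous_const

theorem delay_mem_Icc (hr : 0 ≤ r) (hs : s ≤ r + ε) : delay ε s ∈ Icc 0 r :=
  ⟨le_max_right _ _, max_le (by linarith) hr⟩

theorem abs_delay_sub_le (hε : 0 ≤ ε) (hs : 0 ≤ s) : |delay ε s - s| ≤ ε := by
  unfold delay
  rw [abs_le]
  constructor <;> cases max_cases (s - ε) 0 <;> linarith

noncomputable def delayedPicard (f a : ℝ → ℝ) (ε : ℝ) (V : ℝ → ℝ) (t : ℝ) : ℝ :=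
  ∫ s in (0 : ℝ)..t, f (a (delay ε s) + V (delay ε s))

theorem measurable_comp_delay (hfc : Continuous f) (ha : Antitone a) (hV : Measurable V) :
    Measurable fun s => f (a (delay ε s) + V (delay ε s)) :=
  hfc.measurable.comp ((ha.measurable.add hV).comp continuous_delay.measurable)

theorem apply_comp_delay_le (hf : Antitone f) (ha : Antitone a) (hε : 0 ≤ ε)
    (hV0 : ∀ x ≥ 0, 0 ≤ V x) (ht : 0 ≤ t) (hst : s ≤ t) :
    f (a (delay ε s) + V (delay ε s)) ≤ f (a t) :=
  have hd := delay_mem_Icc (ε := ε) ht (by linarith : s ≤ t + ε)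
  apply_add_le_apply hf ha (hV0 _ hd.1) hd.2

theorem intervalIntegrable_comp_delay (hf0 : ∀ y, 0 ≤ f y) (hf : Antitone f)
    (hfc : Continuous f) (ha : Antitone a) (hε : 0 ≤ ε) (hV : Measurable V)
    (hV0 : ∀ x ≥ 0, 0 ≤ V x) (x y : ℝ) :
    IntervalIntegrable (fun s => f (a (delay ε s) + V (delay ε s))) volume x y :=
  intervalIntegrable_of_norm_le (measurable_comp_delay hfc ha hV).aestronglyMeasurable
    fun s hs => by
      rw [Real.norm_eq_abs, abs_of_nonneg (hf0 _)]
      exact apply_comp_delay_le hf ha hε hV0 (le_max_right _ 0) (hs.2.trans (le_max_left _ 0))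

theorem continuous_delayedPicard (hf0 : ∀ y, 0 ≤ f y) (hf : Antitone f) (hfc : Continuous f)
    (ha : Antitone a) (hε : 0 ≤ ε) (hV : Measurable V) (hV0 : ∀ x ≥ 0, 0 ≤ V x) :
    Continuous (delayedPicard f a ε V) :=
  continuous_primitive (intervalIntegrable_comp_delay hf0 hf hfc ha hε hV hV0) 0

theorem delayedPicard_nonneg (hf0 : ∀ y, 0 ≤ f y) (ht : 0 ≤ t) :
    0 ≤ delayedPicard f a ε V t :=
  integral_nonneg ht fun _ _ => hf0 _

theorem delayedPicard_congr (hε : 0 ≤ ε) (hr : 0 ≤ r) (hVW : EqOn V W (Icc 0 r))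
    (ht : t ≤ r + ε) : delayedPicard f a ε V t = delayedPicard f a ε W t :=
  integral_congr fun s hs => by
    simp only [hVW (delay_mem_Icc hr (hs.2.trans (max_le (by linarith) ht)))]

theorem iterate_delayedPicard_measurable_and_nonneg (hf0 : ∀ y, 0 ≤ f y) (hf : Antitone f)
    (hfc : Continuous f) (ha : Antitone a) (hε : 0 ≤ ε) (k : ℕ) :
    Measurable ((delayedPicard f a ε)^[k] 0) ∧ ∀ x ≥ 0, 0 ≤ (delayedPicard f a ε)^[k] 0 x := by
  induction k with
  | zero => exact ⟨measurable_const, fun _ _ => le_rfl⟩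
  | succ k ih =>
    rw [Function.iterate_succ']
    exact ⟨(continuous_delayedPicard hf0 hf hfc ha hε ih.1 ih.2).measurable,
      fun _ hx => delayedPicard_nonneg hf0 hx⟩

theorem iterate_delayedPicard_eq_succ (hε : 0 ≤ ε) (k : ℕ) :
    EqOn ((delayedPicard f a ε)^[k] 0) ((delayedPicard f a ε)^[k + 1] 0) (Icc 0 (k * ε)) := by
  induction k with
  | zero =>
    intro t ht
    obtain rfl : t = 0 := by simpa using ht
    simp [delayedPicard]
  | succ k ih =>
    intro t ht
    rw [Function.iterate_succ_apply', Function.iterate_succ_apply' _ (k + 1)]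
    exact delayedPicard_congr hε (by positivity) ih (by push_cast at ht; linarith [ht.2])

noncomputable def delayDefect (f a : ℝ → ℝ) (ε : ℝ) (V : ℝ → ℝ) (s : ℝ) : ℝ :=
  f (a (delay ε s) + V (delay ε s)) - f (a s + V s)

theorem measurable_delayDefect (hfc : Continuous f) (ha : Antitone a) (hV : Measurable V) :
    Measurable (delayDefect f a ε V) :=
  (measurable_comp_delay hfc ha hV).sub (hfc.measurable.comp (ha.measurable.add hV))

theorem abs_delayDefect_le (hf0 : ∀ y, 0 ≤ f y) (hf : Antitone f) (ha : Antitone a)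
    (hε : 0 ≤ ε) (hV0 : ∀ x ≥ 0, 0 ≤ V x) (hs : s ∈ Icc 0 t) :
    |delayDefect f a ε V s| ≤ f (a t) :=
  abs_sub_le_of_nonneg_of_le (hf0 _) (apply_comp_delay_le hf ha hε hV0 (hs.1.trans hs.2) hs.2)
    (hf0 _) (apply_add_le_apply hf ha (hV0 s hs.1) hs.2)

theorem intervalIntegrable_delayDefect (hf0 : ∀ y, 0 ≤ f y) (hf : Antitone f)
    (hfc : Continuous f) (ha : Antitone a) (hε : 0 ≤ ε) (hV : Measurable V)
    (hV0 : ∀ x ≥ 0, 0 ≤ V x) (ht : 0 ≤ t) :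
    IntervalIntegrable (delayDefect f a ε V) volume 0 t :=
  (intervalIntegrable_comp_delay hf0 hf hfc ha hε hV hV0 0 t).sub
    (intervalIntegrable_apply_add hf0 hf ha hV0 ht
      (hfc.measurable.comp (ha.measurable.add hV)).aestronglyMeasurable)

theorem abs_sub_le_of_eqOn_delayedPicard (hf0 : ∀ y, 0 ≤ f y) (hf : Antitone f)
    (hfc : Continuous f) (ha : Antitone a) (hε : 0 ≤ ε) (hV : Measurable V)
    (hV0 : ∀ x ≥ 0, 0 ≤ V x) (hVeq : EqOn V (delayedPicard f a ε V) (Icc 0 t)) {x y : ℝ}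
    (hx : x ∈ Icc 0 t) (hy : y ∈ Icc 0 t) : |V x - V y| ≤ f (a t) * |x - y| := by
  have hint := intervalIntegrable_comp_delay hf0 hf hfc ha hε hV hV0
  rw [hVeq hx, hVeq hy, delayedPicard, delayedPicard,
    integral_interval_sub_left (hint 0 x) (hint 0 y), ← Real.norm_eq_abs]
  refine norm_integral_le_of_norm_le_const fun s hs => ?_
  rw [Real.norm_eq_abs, abs_of_nonneg (hf0 _)]
  exact apply_comp_delay_le hf ha hε hV0 (hx.1.trans hx.2) (hs.2.trans (max_le hy.2 hx.2))

theorem add_mem_Icc_of_eqOn_delayedPicard (hf0 : ∀ y, 0 ≤ f y) (hf : Antitone f)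
    (hfc : Continuous f) (ha : Antitone a) (hε : 0 ≤ ε) (hV : Measurable V)
    (hV0 : ∀ x ≥ 0, 0 ≤ V x) (hVeq : EqOn V (delayedPicard f a ε V) (Icc 0 t)) {x : ℝ}
    (hx : x ∈ Icc 0 t) : a x + V x ∈ Icc (a t) (a 0 + f (a t) * t) := by
  have ht : 0 ≤ t := hx.1.trans hx.2
  have hVx := abs_sub_le_of_eqOn_delayedPicard hf0 hf hfc ha hε hV hV0 hVeq hx ⟨le_rfl, ht⟩
  rw [hVeq ⟨le_rfl, ht⟩, delayedPicard, integral_same, sub_zero, sub_zero,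
    abs_of_nonneg hx.1, abs_of_nonneg (hV0 x hx.1)] at hVx
  exact ⟨by linarith [ha hx.2, hV0 x hx.1],
    by linarith [ha hx.1, mul_le_mul_of_nonneg_left hx.2 (hf0 (a t))]⟩

/-- Where `V > W`, the undelayed drift pushes `V - W` down, so `V - W` can only grow through the
two delay defects. -/
theorem sub_le_integral_abs_delayDefect (hf0 : ∀ y, 0 ≤ f y) (hf : Antitone f)
    (hfc : Continuous f) (ha : Antitone a) (hε : 0 ≤ ε) (hη : 0 ≤ η) (hV : Measurable V)
    (hV0 : ∀ x ≥ 0, 0 ≤ V x) (hW : Measurable W) (hW0 : ∀ x ≥ 0, 0 ≤ W x) (ht : 0 ≤ t)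
    (hVeq : EqOn V (delayedPicard f a ε V) (Icc 0 t))
    (hWeq : EqOn W (delayedPicard f a η W) (Icc 0 t)) :
    V t - W t ≤ (∫ s in (0 : ℝ)..t, |delayDefect f a ε V s|) +
      ∫ s in (0 : ℝ)..t, |delayDefect f a η W s| := by
  have hiV := intervalIntegrable_comp_delay hf0 hf hfc ha hε hV hV0
  have hiW := intervalIntegrable_comp_delay hf0 hf hfc ha hη hW hW0
  have hdiff : ∀ s ∈ Icc 0 t, V s - W s = ∫ x in (0 : ℝ)..s,
      (f (a (delay ε x) + V (delay ε x)) - f (a (delay η x) + W (delay η x))) := fun s hs => by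
    rw [integral_sub (hiV 0 s) (hiW 0 s)]
    exact congrArg₂ (· - ·) (hVeq hs) (hWeq hs)
  have hGV := (intervalIntegrable_delayDefect hf0 hf hfc ha hε hV hV0 ht).abs
  have hGW := (intervalIntegrable_delayDefect hf0 hf hfc ha hη hW hW0 ht).abs
  rw [hdiff t ⟨ht, le_rfl⟩, ← integral_add hGV hGW]
  refine integral_le_integral_of_le_of_integral_pos ht ((hiV 0 t).sub (hiW 0 t)) (hGV.add hGW)
    (fun s _ => by positivity) fun s hs hpos => ?_
  rw [← hdiff s hs] at hpos
  have hdrift : f (a s + V s) ≤ f (a s + W s) := hf (by linarith)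
  simp only [delayDefect]
  linarith [le_abs_self (f (a (delay ε s) + V (delay ε s)) - f (a s + V s)),
    neg_abs_le (f (a (delay η s) + W (delay η s)) - f (a s + W s))]

end Delay

section DelayedSequence

variable {f a : ℝ → ℝ} {ε : ℕ → ℝ} {U : ℕ → ℝ → ℝ} {s t : ℝ}

/-- Uniform continuity of `f` makes the defect vanish before we know that `U n s` converges. -/
theorem tendsto_abs_delayDefect (hf0 : ∀ y, 0 ≤ f y) (hf : Antitone f)
    (hfc : Continuous f) (ha : Antitone a) (hε0 : ∀ n, 0 ≤ ε n) (hε : Tendsto ε atTop (𝓝 0))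
    (hUm : ∀ n, Measurable (U n)) (hU0 : ∀ n, ∀ x ≥ 0, 0 ≤ U n x)
    (hUeq : ∀ᶠ n in atTop, EqOn (U n) (delayedPicard f a (ε n) (U n)) (Icc 0 t))
    (hs : s ∈ Ioc 0 t) (has : ContinuousAt a s) :
    Tendsto (fun n => |delayDefect f a (ε n) (U n) s|) atTop (𝓝 0) := by
  have hsI : s ∈ Icc 0 t := Ioc_subset_Icc_self hs
  have ht : 0 ≤ t := hsI.1.trans hsI.2
  have hd : ∀ n, delay (ε n) s ∈ Icc 0 t := fun n => delay_mem_Icc ht (by linarith [hε0 n, hs.2])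
  have hmem : ∀ᶠ n in atTop, ∀ x ∈ Icc 0 t, a x + U n x ∈ Icc (a t) (a 0 + f (a t) * t) :=
    hUeq.mono fun n hn _ =>
      add_mem_Icc_of_eqOn_delayedPicard hf0 hf hfc ha (hε0 n) (hUm n) (hU0 n) hn
  have hdelay : Tendsto (fun n => delay (ε n) s) atTop (𝓝 s) := by
    simpa [delay, max_eq_left hs.1.le] using
      ((tendsto_const_nhds (x := s)).sub hε).max (tendsto_const_nhds (x := (0 : ℝ)))
  have hbound : Tendsto (fun n => dist (a (delay (ε n) s)) (a s) + f (a t) * ε n) atTop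
      (𝓝 0) := by
    simpa using (tendsto_iff_dist_tendsto_zero.1 (has.tendsto.comp hdelay)).add
      (hε.const_mul (f (a t)))
  have hdist : Tendsto (fun n => dist (a (delay (ε n) s) + U n (delay (ε n) s)) (a s + U n s))
      atTop (𝓝 0) := by
    refine squeeze_zero' (Eventually.of_forall fun _ => dist_nonneg) ?_ hbound
    filter_upwards [hUeq] with n hn
    have hU := (abs_sub_le_of_eqOn_delayedPicard hf0 hf hfc ha (hε0 n) (hUm n) (hU0 n) hn
      (hd n) hsI).trans (mul_le_mul_of_nonneg_left (abs_delay_sub_le (hε0 n) hsI.1) (hf0 _))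
    rw [Real.dist_eq, Real.dist_eq, add_sub_add_comm]
    exact (abs_add_le _ _).trans (add_le_add le_rfl hU)
  simpa only [delayDefect, Real.dist_eq] using
    (isCompact_Icc.uniformContinuousOn_of_continuous hfc.continuousOn).tendsto_dist_comp
      (hmem.mono fun n hn => hn _ (hd n)) (hmem.mono fun n hn => hn s hsI) hdist

theorem tendsto_integral_abs_delayDefect (hf0 : ∀ y, 0 ≤ f y) (hf : Antitone f)
    (hfc : Continuous f) (ha : Antitone a) (hε0 : ∀ n, 0 ≤ ε n) (hε : Tendsto ε atTop (𝓝 0))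
    (hUm : ∀ n, Measurable (U n)) (hU0 : ∀ n, ∀ x ≥ 0, 0 ≤ U n x) (ht : 0 ≤ t)
    (hUeq : ∀ᶠ n in atTop, EqOn (U n) (delayedPicard f a (ε n) (U n)) (Icc 0 t)) :
    Tendsto (fun n => ∫ s in (0 : ℝ)..t, |delayDefect f a (ε n) (U n) s|) atTop (𝓝 0) := by
  have hae : ∀ᵐ s, s ∈ uIoc 0 t →
      Tendsto (fun n => |delayDefect f a (ε n) (U n) s|) atTop (𝓝 0) := by
    filter_upwards [ha.countable_not_continuousAt.ae_notMem volume] with s hs hsI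
    rw [uIoc_of_le ht] at hsI
    exact tendsto_abs_delayDefect hf0 hf hfc ha hε0 hε hUm hU0 hUeq hsI (not_not.1 hs)
  simpa using tendsto_integral_filter_of_dominated_convergence (fun _ => f (a t))
    (Eventually.of_forall fun n =>
      (measurable_delayDefect hfc ha (hUm n)).abs.aestronglyMeasurable)
    (Eventually.of_forall fun n => ae_of_all _ fun s hs => by
      rw [uIoc_of_le ht] at hs
      rw [Real.norm_eq_abs, abs_abs]
      exact abs_delayDefect_le hf0 hf ha (hε0 n) (hU0 n) (Ioc_subset_Icc_self hs))
    intervalIntegrable_const hae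

theorem cauchySeq_of_eqOn_delayedPicard (hf0 : ∀ y, 0 ≤ f y) (hf : Antitone f)
    (hfc : Continuous f) (ha : Antitone a) (hε0 : ∀ n, 0 ≤ ε n) (hε : Tendsto ε atTop (𝓝 0))
    (hUm : ∀ n, Measurable (U n)) (hU0 : ∀ n, ∀ x ≥ 0, 0 ≤ U n x) (ht : 0 ≤ t)
    (hUeq : ∀ᶠ n in atTop, EqOn (U n) (delayedPicard f a (ε n) (U n)) (Icc 0 t)) :
    CauchySeq fun n => U n t := by
  have hG := tendsto_integral_abs_delayDefect hf0 hf hfc ha hε0 hε hUm hU0 ht hUeq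
  rw [cauchySeq_iff_tendsto_dist_atTop_0, ← prod_atTop_atTop_eq]
  refine squeeze_zero' (Eventually.of_forall fun _ => dist_nonneg) ?_
    (by simpa using (hG.comp tendsto_fst).add (hG.comp tendsto_snd))
  filter_upwards [hUeq.prod_mk hUeq] with ⟨n, m⟩ ⟨hn, hm⟩
  have hle := fun {i j} (hi : EqOn (U i) _ _) (hj : EqOn (U j) _ _) =>
    sub_le_integral_abs_delayDefect hf0 hf hfc ha (hε0 i) (hε0 j) (hUm i) (hU0 i) (hUm j)
      (hU0 j) ht hi hj
  rw [Real.dist_eq, abs_sub_le_iff]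
  exact ⟨hle hn hm, (hle hm hn).trans_eq (add_comm _ _)⟩

theorem exists_eq_integral_of_eqOn_delayedPicard (hf0 : ∀ y, 0 ≤ f y) (hf : Antitone f)
    (hfc : Continuous f) (ha : Antitone a) (hε0 : ∀ n, 0 ≤ ε n) (hε : Tendsto ε atTop (𝓝 0))
    (hUm : ∀ n, Measurable (U n)) (hU0 : ∀ n, ∀ x ≥ 0, 0 ≤ U n x)
    (hUeq : ∀ t, ∀ᶠ n in atTop, EqOn (U n) (delayedPicard f a (ε n) (U n)) (Icc 0 t)) :
    ∃ V : ℝ → ℝ, ∀ t ≥ (0 : ℝ), IntervalIntegrable (fun s => f (a s + V s)) volume 0 t ∧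
      V t = ∫ s in (0 : ℝ)..t, f (a s + V s) := by
  set V : ℝ → ℝ := fun t => limUnder atTop fun n => U n t
  have hlim : ∀ t ≥ (0 : ℝ), Tendsto (fun n => U n t) atTop (𝓝 (V t)) := fun t ht =>
    (cauchySeq_of_eqOn_delayedPicard hf0 hf hfc ha hε0 hε hUm hU0 ht (hUeq t)).tendsto_limUnder
  have hV0 : ∀ t ≥ (0 : ℝ), 0 ≤ V t := fun t ht =>
    ge_of_tendsto' (hlim t ht) fun n => hU0 n t ht
  have hlimIoc : ∀ t, ∀ s ∈ Ioc 0 t, Tendsto (fun n => U n s) atTop (𝓝 (V s)) :=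
    fun _ s hs => hlim s hs.1.le
  refine ⟨V, fun t ht => ⟨intervalIntegrable_apply_add_of_tendsto hf0 hf hfc ha hUm hV0 ht
    (hlimIoc t), tendsto_nhds_unique (hlim t ht) ?_⟩⟩
  have hdefect : Tendsto (fun n => ∫ s in (0 : ℝ)..t, delayDefect f a (ε n) (U n) s) atTop
      (𝓝 0) :=
    squeeze_zero_norm' (Eventually.of_forall fun n => abs_integral_le_integral_abs ht)
      (tendsto_integral_abs_delayDefect hf0 hf hfc ha hε0 hε hUm hU0 ht (hUeq t))
  have hsum := (tendsto_integral_apply_add hf0 hf hfc ha hUm hU0 ht (hlimIoc t)).add hdefect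
  rw [add_zero] at hsum
  refine hsum.congr' ?_
  filter_upwards [hUeq t] with n hn
  rw [hn ⟨ht, le_rfl⟩, delayedPicard, ← integral_add
    (intervalIntegrable_apply_add hf0 hf ha (hU0 n) ht
      (hfc.measurable.comp (ha.measurable.add (hUm n))).aestronglyMeasurable)
    (intervalIntegrable_delayDefect hf0 hf hfc ha (hε0 n) (hUm n) (hU0 n) ht)]
  simp only [delayDefect, add_sub_cancel]

end DelayedSequence

/-- Delay `1 / (n + 1)` and `(n + 1) ^ 2` iterations make the `n`-th approximant solve the
delayed equation up to time `n + 1`. -/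
theorem exists_eq_add_integral {f a : ℝ → ℝ} (hf0 : ∀ y, 0 ≤ f y) (hf : Antitone f)
    (hfc : Continuous f) (ha : Antitone a) :
    ∃ Y : ℝ → ℝ, ∀ t ≥ (0 : ℝ), IntervalIntegrable (fun s => f (Y s)) volume 0 t ∧
      Y t = a t + ∫ s in (0 : ℝ)..t, f (Y s) := by
  set ε : ℕ → ℝ := fun n => 1 / ((n : ℝ) + 1)
  have hε0 : ∀ n, 0 ≤ ε n := fun n => by positivity
  have hU := fun n =>
    iterate_delayedPicard_measurable_and_nonneg hf0 hf hfc ha (hε0 n) ((n + 1) ^ 2)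
  have hUeq : ∀ t, ∀ᶠ n in atTop, EqOn ((delayedPicard f a (ε n))^[(n + 1) ^ 2] 0)
      (delayedPicard f a (ε n) ((delayedPicard f a (ε n))^[(n + 1) ^ 2] 0)) (Icc 0 t) := by
    intro t
    filter_upwards [tendsto_natCast_atTop_atTop.eventually_ge_atTop t] with n hn x hx
    have hεn : (((n + 1) ^ 2 : ℕ) : ℝ) * ε n = n + 1 := by
      simp only [ε]
      push_cast
      field_simp
    have h := iterate_delayedPicard_eq_succ (f := f) (a := a) (hε0 n) ((n + 1) ^ 2)
      ⟨hx.1, by linarith [hx.2]⟩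
    rwa [Function.iterate_succ_apply'] at h
  obtain ⟨V, hV⟩ := exists_eq_integral_of_eqOn_delayedPicard hf0 hf hfc ha hε0
    tendsto_one_div_add_atTop_nhds_zero_nat (fun n => (hU n).1) (fun n => (hU n).2) hUeq
  exact ⟨fun t => a t + V t, fun t ht => ⟨(hV t ht).1, congrArg (a t + ·) (hV t ht).2⟩⟩

theorem integral_equation_exists_unique_general
    (f : ℝ → ℝ) (hfpos : ∀ y, 0 < f y) (hfanti : Antitone f) (hfcont : Continuous f)
    (z : ℝ)
    (S : ℝ → ℝ)
    (hSmono : MonotoneOn S (Ici (0 : ℝ)))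
    (hSrc : ∀ t ≥ (0 : ℝ), ContinuousWithinAt S (Ici t) t) :
    (∃ Y : ℝ → ℝ,
      (∀ t ≥ (0 : ℝ), ContinuousWithinAt Y (Ici t) t) ∧
      (∀ t ≥ (0 : ℝ), IntervalIntegrable (fun s => f (Y s)) volume 0 t) ∧
      (∀ t ≥ (0 : ℝ), Y t = z - S t + ∫ s in (0 : ℝ)..t, f (Y s))) ∧
    (∀ Y₁ Y₂ : ℝ → ℝ,
      ((∀ t ≥ (0 : ℝ), ContinuousWithinAt Y₁ (Ici t) t) ∧
        (∀ t ≥ (0 : ℝ), IntervalIntegrable (fun s => f (Y₁ s)) volume 0 t) ∧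
        (∀ t ≥ (0 : ℝ), Y₁ t = z - S t + ∫ s in (0 : ℝ)..t, f (Y₁ s))) →
      ((∀ t ≥ (0 : ℝ), ContinuousWithinAt Y₂ (Ici t) t) ∧
        (∀ t ≥ (0 : ℝ), IntervalIntegrable (fun s => f (Y₂ s)) volume 0 t) ∧
        (∀ t ≥ (0 : ℝ), Y₂ t = z - S t + ∫ s in (0 : ℝ)..t, f (Y₂ s))) →
      ∀ t ≥ (0 : ℝ), Y₁ t = Y₂ t) := by
  have ha : Antitone fun t => z - S (max t 0) := fun x y hxy =>
    sub_le_sub_left (hSmono (le_max_right x 0) (le_max_right y 0) (max_le_max hxy le_rfl)) z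
  obtain ⟨Y, hY⟩ := exists_eq_add_integral (fun y => (hfpos y).le) hfanti hfcont ha
  have hYeq : ∀ t ≥ (0 : ℝ), Y t = z - S t + ∫ s in (0 : ℝ)..t, f (Y s) := fun t ht => by
    simpa only [max_eq_left ht] using (hY t ht).2
  refine ⟨⟨Y, fun t ht => ?_, fun t ht => (hY t ht).1, hYeq⟩,
    fun Y₁ Y₂ h₁ h₂ t ht => eq_of_eq_add_integral hfanti h₁.2.1 h₂.2.1 h₁.2.2 h₂.2.2 ht⟩
  exact continuousWithinAt_Ici_of_eq_add_integral ht (fun x hx => hYeq x (ht.trans hx))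
    (continuousWithinAt_const.sub (hSrc t ht)) (hY (t + 1) (by linarith)).1

/-- Existence and uniqueness for the drifted integral equation: let `f` be positive,
nonincreasing and continuous, let `z > 0`, and let `S : [0,∞) → [0,∞)` be
right-continuous nondecreasing with `S 0 = 0`.  Then the integral equation
`Y t = z - S t + ∫_0^t f (Y s) ds`, `t ≥ 0`, has exactly one right-continuous solution:
a solution exists, and any two solutions agree on `[0,∞)`. -/
theorem integral_equation_exists_unique
    (f : ℝ → ℝ) (hfpos : ∀ y, 0 < f y) (hfanti : Antitone f) (hfcont : Continuous f)
    (z : ℝ) (hz : 0 < z)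
    (S : ℝ → ℝ) (hS0 : S 0 = 0) (hSnonneg : ∀ t ≥ (0 : ℝ), 0 ≤ S t)
    (hSmono : MonotoneOn S (Ici (0 : ℝ)))
    (hSrc : ∀ t ≥ (0 : ℝ), ContinuousWithinAt S (Ici t) t) :
    (∃ Y : ℝ → ℝ,
      (∀ t ≥ (0 : ℝ), ContinuousWithinAt Y (Ici t) t) ∧
      (∀ t ≥ (0 : ℝ), IntervalIntegrable (fun s => f (Y s)) volume 0 t) ∧
      (∀ t ≥ (0 : ℝ), Y t = z - S t + ∫ s in (0 : ℝ)..t, f (Y s))) ∧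
    (∀ Y₁ Y₂ : ℝ → ℝ,
      ((∀ t ≥ (0 : ℝ), ContinuousWithinAt Y₁ (Ici t) t) ∧
        (∀ t ≥ (0 : ℝ), IntervalIntegrable (fun s => f (Y₁ s)) volume 0 t) ∧
        (∀ t ≥ (0 : ℝ), Y₁ t = z - S t + ∫ s in (0 : ℝ)..t, f (Y₁ s))) →
      ((∀ t ≥ (0 : ℝ), ContinuousWithinAt Y₂ (Ici t) t) ∧
        (∀ t ≥ (0 : ℝ), IntervalIntegrable (fun s => f (Y₂ s)) volume 0 t) ∧
        (∀ t ≥ (0 : ℝ), Y₂ t = z - S t + ∫ s in (0 : ℝ)..t, f (Y₂ s))) →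
      ∀ t ≥ (0 : ℝ), Y₁ t = Y₂ t) :=
  integral_equation_exists_unique_general f hfpos hfanti hfcont z S hSmono hSrc
end
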